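/- arXiv:0803.3541 — 12 statements merged into one kernel-verified Lean document; each statement's English description precedes it below -/
import Mathlib

section
/- Every separable Banach space over ℝ has the countable separation property (CSP). -/
open Set Cardinal Pointwise

/-- A Banach space `X` over `ℝ` has the countable separation property (CSP) if every set of
continuous linear functionals separating the points of `X` has a countable separating subset. -/
def HasCSP (X : Type*) [NormedAddCommGroup X] [NormedSpace ℝ X] : Prop :=
  ∀ F : Set (X →L[ℝ] ℝ),
    (∀ x : X, x ≠ 0 → ∃ f ∈ F, f x ≠ 0) →
    ∃ F₀ : Set (X →L[ℝ] ℝ), F₀ ⊆ F ∧ F₀.Countable ∧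
      ∀ x : X, x ≠ 0 → ∃ f ∈ F₀, f x ≠ 0

/-!
Fix a dense sequence `(u k)` in `X`. For every `k`, `n ∈ ℕ` and `q ∈ ℚ` pick, if possible, one
`g ∈ F` with `‖g‖ ≤ n` and `q < |g (u k)|`; these countably many choices separate points. Indeed,
if `f ∈ F` has `f x ≠ 0` and `‖f‖ < n`, take `u k` so close to `x` that `n‖x - u k‖ < |f (u k)|`
and a rational `q` in between; the chosen `g` then satisfies
`|g x| ≥ |g (u k)| - n‖x - u k‖ > q - n‖x - u k‖ > 0`.
-/

theorem Set.exists_countable_subset_forall_exists_mem {α ι : Type*} [Countable ι]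
    (F : Set α) (P : ι → α → Prop) :
    ∃ S ⊆ F, S.Countable ∧ ∀ i, (∃ f ∈ F, P i f) → ∃ g ∈ S, P i g := by
  choose w hwF hwP using fun i : {i // ∃ f ∈ F, P i f} => i.2
  refine ⟨range w, range_subset_iff.2 hwF, countable_range w, fun i hi => ?_⟩
  exact ⟨w ⟨i, hi⟩, mem_range_self _, hwP ⟨i, hi⟩⟩

namespace ContinuousLinearMap

variable {𝕜 X : Type*} [NontriviallyNormedField 𝕜] [SeminormedAddCommGroup X] [NormedSpace 𝕜 X]

theorem norm_apply_sub_opNorm_mul_dist_le (f : X →L[𝕜] 𝕜) (x y : X) :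
    ‖f y‖ - ‖f‖ * dist x y ≤ ‖f x‖ := by
  have h : ‖f y - f x‖ ≤ ‖f‖ * dist x y := by
    rw [← map_sub, dist_comm, dist_eq_norm]
    exact f.le_opNorm _
  linarith [norm_sub_norm_le (f y) (f x)]

theorem exists_mem_apply_ne_zero_of_denseRange {u : ℕ → X} (hu : DenseRange u)
    {F S : Set (X →L[𝕜] 𝕜)}
    (hS : ∀ (k n : ℕ) (q : ℚ), (∃ f ∈ F, ‖f‖ ≤ n ∧ q < ‖f (u k)‖) →
      ∃ g ∈ S, ‖g‖ ≤ n ∧ q < ‖g (u k)‖)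
    {x : X} {f : X →L[𝕜] 𝕜} (hfF : f ∈ F) (hfx : f x ≠ 0) :
    ∃ g ∈ S, g x ≠ 0 := by
  obtain ⟨n, hfn⟩ := exists_nat_gt ‖f‖
  have hn : (0 : ℝ) < n := (norm_nonneg f).trans_lt hfn
  have hε : 0 < ‖f x‖ / (2 * n) := by positivity
  obtain ⟨k, hk⟩ := hu.exists_dist_lt x hε
  have hnk : 2 * (n * dist x (u k)) < ‖f x‖ := by
    rw [lt_div_iff₀ (by positivity)] at hk
    linarith
  have hfk : n * dist x (u k) < ‖f (u k)‖ := by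
    have := f.norm_apply_sub_opNorm_mul_dist_le (u k) x
    rw [dist_comm] at this
    nlinarith [dist_nonneg (x := x) (y := u k)]
  obtain ⟨q, hqlo, hqhi⟩ := exists_rat_btwn hfk
  obtain ⟨g, hgS, hgn, hgq⟩ := hS k n q ⟨f, hfF, hfn.le, hqhi⟩
  refine ⟨g, hgS, norm_pos_iff.1 ?_⟩
  have hgx := g.norm_apply_sub_opNorm_mul_dist_le x (u k)
  nlinarith [dist_nonneg (x := x) (y := u k)]

end ContinuousLinearMap

theorem separable_hasCSP_general (X : Type*) [NormedAddCommGroup X] [NormedSpace ℝ X]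
    [TopologicalSpace.SeparableSpace X] : HasCSP X := by
  intro F hF
  let u := TopologicalSpace.denseSeq X
  obtain ⟨S, hSF, hSc, hS⟩ := F.exists_countable_subset_forall_exists_mem
    fun (i : ℕ × ℕ × ℚ) g => ‖g‖ ≤ i.2.1 ∧ (i.2.2 : ℝ) < ‖g (u i.1)‖
  refine ⟨S, hSF, hSc, fun x hx => ?_⟩
  obtain ⟨f, hfF, hfx⟩ := hF x hx
  exact ContinuousLinearMap.exists_mem_apply_ne_zero_of_denseRange
    (TopologicalSpace.denseRange_denseSeq X) (fun k n q => hS (k, n, q)) hfF hfx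

/-- Every separable Banach space over `ℝ` has CSP. -/
theorem separable_hasCSP (X : Type*) [NormedAddCommGroup X] [NormedSpace ℝ X]
    [CompleteSpace X] [TopologicalSpace.SeparableSpace X] : HasCSP X :=
  separable_hasCSP_general X
end

section
/- Let X be a Banach space over ℝ such that the unit sphere S_X = {x ∈ X : ‖x‖ = 1} is Lindelöf in the relative weak topology σ(X, X*). Then X has the countable separation property (CSP). -/
/-! For `f ∈ F` the sets `{f ≠ 0}` are weakly open and cover the unit sphere, so Lindelöfness
yields a countable subfamily still nonvanishing somewhere on each unit vector; by homogeneity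
it then separates every nonzero `x` through `x / ‖x‖`. -/

open Set Cardinal Pointwise

theorem IsLindelof.exists_countable_subset_forall_exists_ne_zero {α ι β : Type*}
    [TopologicalSpace α] [TopologicalSpace β] [T1Space β] [Zero β] {s : Set α}
    (hs : IsLindelof s) {g : ι → α → β} {F : Set ι} (hg : ∀ i ∈ F, Continuous (g i))
    (hF : ∀ x ∈ s, ∃ i ∈ F, g i x ≠ 0) :
    ∃ F₀ ⊆ F, F₀.Countable ∧ ∀ x ∈ s, ∃ i ∈ F₀, g i x ≠ 0 := by
  obtain ⟨F₀, hF₀F, hF₀c, hcover⟩ := hs.elim_countable_subcover_image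
    (c := fun i ↦ g i ⁻¹' {0}ᶜ) (fun i hi ↦ isOpen_compl_singleton.preimage (hg i hi))
    (fun x hx ↦ by simpa using hF x hx)
  exact ⟨F₀, hF₀F, hF₀c, fun x hx ↦ by simpa using hcover hx⟩

theorem exists_apply_ne_zero_of_forall_norm_eq_one {𝕜 X : Type*} [RCLike 𝕜]
    [NormedAddCommGroup X] [NormedSpace 𝕜 X] {F : Set (X →L[𝕜] 𝕜)}
    (hF : ∀ x : X, ‖x‖ = 1 → ∃ f ∈ F, f x ≠ 0) {x : X} (hx : x ≠ 0) :
    ∃ f ∈ F, f x ≠ 0 := by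
  obtain ⟨f, hfF, hf⟩ := hF _ (norm_smul_inv_norm (𝕜 := 𝕜) hx)
  refine ⟨f, hfF, fun hfx ↦ hf ?_⟩
  rw [map_smul, hfx, smul_zero]

theorem WeakSpace.continuous_apply {𝕜 X : Type*} [CommSemiring 𝕜] [TopologicalSpace 𝕜]
    [ContinuousAdd 𝕜] [ContinuousConstSMul 𝕜 𝕜] [AddCommMonoid X] [Module 𝕜 X]
    [TopologicalSpace X] (f : X →L[𝕜] 𝕜) :
    Continuous fun y : WeakSpace 𝕜 X ↦ f ((toWeakSpace 𝕜 X).symm y) :=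
  WeakBilin.eval_continuous _ f

theorem hasCSP_of_weakLindelof_sphere_general (X : Type*) [NormedAddCommGroup X] [NormedSpace ℝ X]
    (hL : IsLindelof ((toWeakSpace ℝ X) '' {x : X | ‖x‖ = 1})) : HasCSP X := by
  intro F hF
  have hF_sphere : ∀ y ∈ (toWeakSpace ℝ X) '' {x : X | ‖x‖ = 1},
      ∃ f ∈ F, f ((toWeakSpace ℝ X).symm y) ≠ 0 := by
    rintro _ ⟨x, hx, rfl⟩
    simpa using hF x (by rintro rfl; simp at hx)
  obtain ⟨F₀, hF₀F, hF₀c, hF₀⟩ := hL.exists_countable_subset_forall_exists_ne_zero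
    (fun f _ ↦ WeakSpace.continuous_apply f) hF_sphere
  exact ⟨F₀, hF₀F, hF₀c, fun x ↦ exists_apply_ne_zero_of_forall_norm_eq_one
    fun y hy ↦ by simpa using hF₀ _ ⟨y, hy, rfl⟩⟩

/-- If the unit sphere of a Banach space is Lindelöf in the weak topology, then the space
has CSP. -/
theorem hasCSP_of_weakLindelof_sphere (X : Type*) [NormedAddCommGroup X] [NormedSpace ℝ X]
    [CompleteSpace X]
    (hL : IsLindelof ((toWeakSpace ℝ X) '' {x : X | ‖x‖ = 1})) : HasCSP X :=
  hasCSP_of_weakLindelof_sphere_general X hL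
end

section
/- Let X be a Banach space over ℝ with the countable separation property (CSP) and let Y ⊆ X be a closed linear subspace. Then Y (with the induced norm) has CSP. -/
open Set Cardinal Pointwise

/-- A closed subspace of a Banach space with CSP has CSP. -/
theorem hasCSP_subspace (X : Type*) [NormedAddCommGroup X] [NormedSpace ℝ X]
    [CompleteSpace X] (hX : HasCSP X) (Y : Submodule ℝ X) (hY : IsClosed (Y : Set X)) :
    HasCSP Y := by
  intro F hF
  -- Extend each functional on Y to X by Hahn–Banach
  choose ext hext _ using fun f : Y →L[ℝ] ℝ => exists_extension_norm_eq Y f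
  -- G : functionals vanishing on Y
  set G : Set (X →L[ℝ] ℝ) := {g | ∀ y ∈ Y, g y = 0} with hG
  set F' : Set (X →L[ℝ] ℝ) := ext '' F ∪ G with hF'
  have hsep : ∀ x : X, x ≠ 0 → ∃ g ∈ F', g x ≠ 0 := by
    intro x hx
    by_cases hxY : x ∈ Y
    · obtain ⟨f, hf, hfx⟩ := hF ⟨x, hxY⟩ (by simpa using hx)
      exact ⟨ext f, Or.inl ⟨f, hf, rfl⟩, by rw [hext f ⟨x, hxY⟩]; exact hfx⟩
    · obtain ⟨g, u, hgY, hgx⟩ :=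
        geometric_hahn_banach_closed_point (Y.convex) hY hxY
      have hg0 : ∀ y ∈ Y, g y = 0 := by
        intro y hy
        by_contra h
        -- scale y so that g (t • y) ≥ u
        have := hgY ((u / g y) • y) (Y.smul_mem _ hy)
        rw [map_smul, smul_eq_mul, div_mul_cancel₀ _ h] at this
        exact lt_irrefl u this
      refine ⟨g, Or.inr hg0, ?_⟩
      have h0 : g 0 < u := hgY 0 Y.zero_mem
      rw [map_zero] at h0
      exact ne_of_gt (h0.trans hgx)
  obtain ⟨F₀', hsub, hcount, hsep₀⟩ := hX F' hsep
  -- pick preimages under `ext`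
  have hchoice : ∀ g ∈ F₀' ∩ ext '' F, ∃ f ∈ F, ext f = g := by
    rintro g ⟨-, f, hf, rfl⟩; exact ⟨f, hf, rfl⟩
  choose! inv hinvF hinv using hchoice
  refine ⟨inv '' (F₀' ∩ ext '' F), ?_, (hcount.mono inter_subset_left).image _, ?_⟩
  · rintro f ⟨g, hg, rfl⟩; exact hinvF g hg
  · intro y hy
    have hy' : (y : X) ≠ 0 := fun h => hy (Subtype.ext h)
    obtain ⟨g, hg, hgy⟩ := hsep₀ (y : X) hy'
    rcases hsub hg with hgl | hgr
    · refine ⟨inv g, ⟨g, ⟨hg, hgl⟩, rfl⟩, ?_⟩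
      have := hext (inv g) y
      rw [hinv g ⟨hg, hgl⟩] at this
      rw [← this]; exact hgy
    · exact absurd (hgr y y.2) hgy
end

section
/- Let X be a Banach space over ℝ such that its continuous dual X* (with the dual norm) has the countable separation property (CSP). Then X is separable. -/
open Set Cardinal Pointwise

/-- If the dual of a Banach space has CSP, then the space is separable. -/
theorem separable_of_dual_hasCSP (X : Type*) [NormedAddCommGroup X] [NormedSpace ℝ X]
    [CompleteSpace X] (h : HasCSP (X →L[ℝ] ℝ)) :
    TopologicalSpace.SeparableSpace X := by
  classical
  set ι := NormedSpace.inclusionInDoubleDual ℝ X with hι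
  have hsep : ∀ f : X →L[ℝ] ℝ, f ≠ 0 → ∃ g ∈ Set.range ι, g f ≠ 0 := by
    intro f hf
    obtain ⟨x, hx⟩ : ∃ x : X, f x ≠ 0 := by
      by_contra hc
      push_neg at hc
      exact hf (ContinuousLinearMap.ext fun x => by simp [hc x])
    exact ⟨ι x, Set.mem_range_self x, by simpa [hι, NormedSpace.dual_def] using hx⟩
  obtain ⟨F₀, hF₀sub, hF₀c, hF₀sep⟩ := h (Set.range ι) hsep
  have hchoice : ∀ g ∈ F₀, ∃ x : X, ι x = g := fun g hg => hF₀sub hg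
  choose! φ hφ using hchoice
  set S : Set X := φ '' F₀ with hS
  have hSc : S.Countable := hF₀c.image φ
  have hdense : (Submodule.span ℝ S).topologicalClosure = ⊤ := by
    by_contra hne
    obtain ⟨x, hx⟩ : ∃ x : X, x ∉ (Submodule.span ℝ S).topologicalClosure := by
      by_contra hc
      push_neg at hc
      exact hne (Submodule.eq_top_iff'.2 hc)
    obtain ⟨f, u, hfx, hfb⟩ := geometric_hahn_banach_point_closed
      (Submodule.span ℝ S).topologicalClosure.convex
      (Submodule.isClosed_topologicalClosure _) hx
    -- f vanishes on the closed subspace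
    have hfzero : ∀ y ∈ (Submodule.span ℝ S).topologicalClosure, f y = 0 := by
      intro y hy
      by_contra hfy
      have hmem : ((u - 1) / f y) • y ∈ (Submodule.span ℝ S).topologicalClosure :=
        Submodule.smul_mem _ _ hy
      have := hfb _ hmem
      rw [map_smul, smul_eq_mul, div_mul_cancel₀ _ hfy] at this
      linarith
    have hu0 : u < 0 := by
      have := hfb 0 (Submodule.zero_mem _)
      simpa using this
    have hfne : f ≠ 0 := by
      intro hf0
      rw [hf0] at hfx
      simp at hfx
      linarith
    obtain ⟨g, hgF₀, hg⟩ := hF₀sep f hfne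
    have hφg : ι (φ g) = g := hφ g hgF₀
    have hφgS : φ g ∈ S := Set.mem_image_of_mem φ hgF₀
    have : f (φ g) = 0 :=
      hfzero _ (Submodule.le_topologicalClosure _ (Submodule.subset_span hφgS))
    apply hg
    rw [← hφg]
    simpa [hι, NormedSpace.dual_def] using this
  -- separability
  have : TopologicalSpace.IsSeparable (Set.univ : Set X) := by
    have h1 : TopologicalSpace.IsSeparable (Submodule.span ℝ S : Set X) :=
      hSc.isSeparable.span
    have h2 := h1.closure
    have h3 : closure (Submodule.span ℝ S : Set X) = Set.univ := by
      have := congrArg (fun (p : Submodule ℝ X) => (p : Set X)) hdense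
      simpa [Submodule.topologicalClosure_coe] using this
    rwa [h3] at h2
  exact TopologicalSpace.isSeparable_univ_iff.1 this
end

section
/- Let X be a Banach space over ℝ that has the countable separation property (CSP) and admits a Markushevich basis. Then X is separable. -/
open Set Cardinal Pointwise

/-- A Banach space with CSP admitting a Markushevich basis is separable. -/
theorem separable_of_hasCSP_mBasis (X : Type*) [NormedAddCommGroup X] [NormedSpace ℝ X]
    [CompleteSpace X] (hCSP : HasCSP X) {I : Type*} (x : I → X) (f : I → (X →L[ℝ] ℝ))
    (hdiag : ∀ i, f i (x i) = 1)
    (hoff : ∀ i j, i ≠ j → f i (x j) = 0)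
    (hspan : (Submodule.span ℝ (Set.range x)).topologicalClosure = ⊤)
    (hsep : ∀ v : X, v ≠ 0 → ∃ i, f i v ≠ 0) :
    TopologicalSpace.SeparableSpace X := by
  obtain ⟨F₀, hF₀sub, hF₀cnt, hF₀sep⟩ := hCSP (Set.range f) (fun v hv => by
    obtain ⟨i, hi⟩ := hsep v hv
    exact ⟨f i, ⟨i, rfl⟩, hi⟩)
  -- choose an index for each functional in F₀
  have hchoice : ∀ g ∈ F₀, ∃ i, f i = g := fun g hg => hF₀sub hg
  choose c hc using hchoice
  set J : Set I := {i | ∃ g, ∃ hg : g ∈ F₀, c g hg = i} with hJ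
  have hJcnt : J.Countable := by
    have hct : Countable F₀ := hF₀cnt.to_subtype
    have : J ⊆ Set.range (fun g : F₀ => c g g.2) := by
      rintro i ⟨g, hg, rfl⟩
      exact ⟨⟨g, hg⟩, rfl⟩
    exact (Set.countable_range _).mono this
  -- every x i with i ∉ J is zero
  have hx0 : ∀ i, i ∉ J → x i = 0 := by
    intro i hi
    by_contra hne
    obtain ⟨g, hg, hgx⟩ := hF₀sep (x i) hne
    have hji : c g hg ≠ i := fun h => hi ⟨g, hg, h⟩
    have : f (c g hg) (x i) = 0 := hoff _ _ hji
    rw [hc g hg] at this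
    exact hgx this
  have hsub : Set.range x ⊆ insert (0 : X) (x '' J) := by
    rintro _ ⟨i, rfl⟩
    by_cases hi : i ∈ J
    · exact Set.mem_insert_of_mem _ ⟨i, hi, rfl⟩
    · exact hx0 i hi ▸ Set.mem_insert _ _
  have hcnt : (insert (0 : X) (x '' J)).Countable := (hJcnt.image x).insert 0
  have hsep' : TopologicalSpace.IsSeparable (Set.univ : Set X) := by
    have h1 : TopologicalSpace.IsSeparable
        (closure (Submodule.span ℝ (insert (0 : X) (x '' J)) : Set X)) :=
      hcnt.isSeparable.span.closure
    have h2 : (Set.univ : Set X) ⊆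
        closure (Submodule.span ℝ (insert (0 : X) (x '' J)) : Set X) := by
      intro v _
      have : v ∈ (Submodule.span ℝ (Set.range x)).topologicalClosure := hspan ▸ trivial
      have hmono : (Submodule.span ℝ (Set.range x) : Set X) ⊆
          (Submodule.span ℝ (insert (0 : X) (x '' J)) : Set X) :=
        Submodule.span_mono hsub
      exact closure_mono hmono this
    exact h1.mono h2
  rw [← TopologicalSpace.isSeparable_univ_iff]
  exact hsep'
end

section
/- Let X be a Banach space over ℝ with the countable separation property (CSP) and let C ⊆ X be a set that is compact in the weak topology σ(X, X*). Then C is separable (in the norm topology). -/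
open Set Cardinal Pointwise

/-- In a Banach space with CSP, every weakly compact subset is (norm) separable. -/
theorem weaklyCompact_separable_of_hasCSP (X : Type*) [NormedAddCommGroup X]
    [NormedSpace ℝ X] [CompleteSpace X] (hCSP : HasCSP X) (C : Set X)
    (hC : IsCompact ((toWeakSpace ℝ X) '' C)) :
    TopologicalSpace.IsSeparable C := by
  classical
  -- Get a countable separating family of functionals from CSP
  obtain ⟨F₀, -, hF₀c, hF₀sep⟩ := hCSP Set.univ (fun x hx => by
    obtain ⟨f, hf⟩ := SeparatingDual.exists_ne_zero (R := ℝ) hx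
    exact ⟨f, Set.mem_univ f, hf⟩)
  have := hF₀c.to_subtype
  set W := toWeakSpace ℝ X with hW
  set K : Set (WeakSpace ℝ X) := W '' C with hK
  have hKc : IsCompact K := hC
  have : CompactSpace K := isCompact_iff_compactSpace.mp hKc
  -- Evaluation map into a metrizable (second countable) product
  let g : K → (F₀ → ℝ) := fun y f => (f : X →L[ℝ] ℝ) (W.symm y.1)
  have hgc : Continuous g := by
    refine continuous_pi fun f => ?_
    have h1 : Continuous fun y : WeakSpace ℝ X => (f : X →L[ℝ] ℝ) (W.symm y) :=
      WeakBilin.eval_continuous ((topDualPairing ℝ X).flip) (f : X →L[ℝ] ℝ)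
    exact h1.comp continuous_subtype_val
  have hginj : Function.Injective g := by
    intro y z hyz
    have hall : ∀ f : X →L[ℝ] ℝ, f ∈ F₀ → f (W.symm y.1) = f (W.symm z.1) := by
      intro f hf
      exact congrFun hyz ⟨f, hf⟩
    have hab : W.symm y.1 = W.symm z.1 := by
      by_contra hne
      have hsub : W.symm y.1 - W.symm z.1 ≠ 0 := sub_ne_zero_of_ne hne
      obtain ⟨f, hfF, hfne⟩ := hF₀sep _ hsub
      exact hfne (by rw [map_sub, hall f hfF, sub_self])
    have : y.1 = z.1 := by
      have := congrArg W hab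
      simpa using this
    exact Subtype.ext this
  have hemb : Topology.IsEmbedding g := (hgc.isClosedEmbedding hginj).toIsEmbedding
  have : SecondCountableTopology K := hemb.secondCountableTopology
  -- A countable weakly dense subset of K
  obtain ⟨t, htc, htd⟩ := TopologicalSpace.exists_countable_dense K
  set D₀ : Set (WeakSpace ℝ X) := Subtype.val '' t with hD₀
  have hD₀c : D₀.Countable := htc.image _
  have hKD₀ : K ⊆ closure D₀ := by
    intro y hy
    exact map_mem_closure continuous_subtype_val (htd ⟨y, hy⟩)
      (fun a ha => Set.mem_image_of_mem _ ha)
  -- The closed span of the dense set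
  set D : Set X := W.symm '' D₀ with hD
  set S : Submodule ℝ X := Submodule.span ℝ D with hS
  have hYsep : TopologicalSpace.IsSeparable (closure (S : Set X)) :=
    ((hD₀c.image _).isSeparable.span).closure
  -- Mazur: the norm closure of the convex set S is weakly closed
  have hmaz : W '' closure (S : Set X) = closure (W '' (S : Set X)) :=
    S.convex.toWeakSpace_closure ℝ
  have hD₀S : D₀ ⊆ W '' (S : Set X) := by
    intro y hy
    refine ⟨W.symm y, Submodule.subset_span ⟨y, hy, rfl⟩, by simp⟩
  have hKY : K ⊆ W '' closure (S : Set X) := by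
    rw [hmaz]
    exact fun y hy => closure_mono hD₀S (hKD₀ hy)
  have hCY : C ⊆ closure (S : Set X) := by
    intro x hx
    obtain ⟨z, hz, hzx⟩ := hKY ⟨x, hx, rfl⟩
    rwa [← W.injective hzx]
  exact hYsep.mono hCY
end

section
/- Let L be a locally compact Hausdorff topological space such that the Banach space C₀(L) of real-valued continuous functions on L vanishing at infinity (with the supremum norm) has the countable separation property (CSP). Then L is dense-separable, and the interior of the derived set of L (the set of non-isolated points of L) is countably perfect. -/
open Set Cardinal Pointwise

section Aux

open ZeroAtInfty

variable {L : Type*} [TopologicalSpace L] [LocallyCompactSpace L] [T2Space L]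

/-- Point evaluation as a continuous linear functional on `C₀(L, ℝ)`. -/
noncomputable def evalC0 (x : L) : C₀(L, ℝ) →L[ℝ] ℝ :=
  LinearMap.mkContinuous
    { toFun := fun f => f x
      map_add' := fun f g => rfl
      map_smul' := fun c f => rfl } 1
    (fun f => by
      simpa using (f.toBCF.norm_coe_le_norm x).trans_eq
        (by rw [ZeroAtInftyContinuousMap.norm_toBCF_eq_norm]))

omit [LocallyCompactSpace L] [T2Space L] in
@[simp] theorem evalC0_apply (x : L) (f : C₀(L, ℝ)) : evalC0 x f = f x := rfl

theorem bumpC0 {x : L} {V : Set L} (hV : IsOpen V) (hx : x ∈ V) :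
    ∃ f : C₀(L, ℝ), f x = 1 ∧ ∀ y ∉ V, f y = 0 := by
  obtain ⟨f, hf1, hf0, hfc, -⟩ :=
    exists_continuous_one_zero_of_isCompact (isCompact_singleton (x := x))
      hV.isClosed_compl (by simpa [Set.disjoint_compl_right_iff_subset] using hx)
  exact ⟨⟨f, hfc.is_zero_at_infty⟩, hf1 rfl, fun y hy => hf0 hy⟩

theorem dense_of_sep {C : Set L}
    (h : ∀ f : C₀(L, ℝ), f ≠ 0 → ∃ c ∈ C, f c ≠ 0) : Dense C := by
  rw [dense_iff_closure_eq, ← Set.compl_empty_iff]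
  by_contra hne
  obtain ⟨x, hx⟩ := Set.nonempty_iff_ne_empty.2 hne
  obtain ⟨f, hf1, hf0⟩ := bumpC0 isClosed_closure.isOpen_compl hx
  obtain ⟨c, hc, hfc⟩ := h f (fun h0 => by simp [h0] at hf1)
  exact hfc (hf0 c (fun hmem => hmem (subset_closure hc)))

/-- From CSP and a set `S` whose point evaluations separate `C₀(L, ℝ)`, extract a countable
dense subset of `S`. -/
theorem exists_countable_dense_subset_of_sep (hCSP : HasCSP C₀(L, ℝ)) {S : Set L}
    (hsep : ∀ f : C₀(L, ℝ), f ≠ 0 → ∃ s ∈ S, f s ≠ 0) :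
    ∃ C ⊆ S, C.Countable ∧ Dense C := by
  obtain ⟨F₀, hF₀sub, hF₀c, hF₀sep⟩ := hCSP (evalC0 '' S) (by
    intro f hf
    obtain ⟨s, hs, hfs⟩ := hsep f hf
    exact ⟨evalC0 s, Set.mem_image_of_mem _ hs, hfs⟩)
  have hw : ∀ g ∈ F₀, ∃ s ∈ S, evalC0 s = g := fun g hg => hF₀sub hg
  choose w hwS hwe using hw
  haveI : Countable F₀ := hF₀c.to_subtype
  refine ⟨Set.range (fun p : F₀ => w p.1 p.2), ?_, Set.countable_range _, ?_⟩
  · rintro c ⟨p, rfl⟩; exact hwS _ _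
  · apply dense_of_sep
    intro f hf
    obtain ⟨g, hg, hgf⟩ := hF₀sep f hf
    exact ⟨w g hg, ⟨⟨g, hg⟩, rfl⟩, by rwa [← hwe g hg] at hgf⟩

end Aux

open ZeroAtInfty in
/-- If `C₀(L)` has CSP for a locally compact Hausdorff space `L`, then `L` is
dense-separable and the interior of the derived set of `L` is countably perfect. -/
theorem denseSeparable_of_hasCSP_C0 (L : Type*) [TopologicalSpace L]
    [LocallyCompactSpace L] [T2Space L]
    (hCSP : HasCSP C₀(L, ℝ)) :
    (∀ A : Set L, Dense A → ∃ C ⊆ A, C.Countable ∧ A ⊆ closure C) ∧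
      (∀ x ∈ interior {y : L | y ∈ closure ({y}ᶜ : Set L)},
        ∃ C ⊆ interior {y : L | y ∈ closure ({y}ᶜ : Set L)} \ {x},
          C.Countable ∧ x ∈ closure C) := by
  constructor
  · intro A hA
    obtain ⟨C, hCA, hCc, hCd⟩ := exists_countable_dense_subset_of_sep hCSP (S := A) (by
      intro f hf
      by_contra hno
      push_neg at hno
      apply hf
      ext y
      have : (⇑f : L → ℝ) = (0 : C₀(L, ℝ)) :=
        Continuous.ext_on hA f.continuous (map_continuous _) (fun a ha => by simp [hno a ha])
      simp [congrFun this y])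
    exact ⟨C, hCA, hCc, fun a _ => hCd a⟩
  · intro x hx
    obtain ⟨D, hDx, hDc, hDd⟩ := exists_countable_dense_subset_of_sep hCSP
      (S := ({x}ᶜ : Set L)) (by
      intro f hf
      by_contra hno
      push_neg at hno
      apply hf
      have hx' : x ∈ closure ({x}ᶜ : Set L) := interior_subset (s := {y : L | y ∈ closure ({y}ᶜ : Set L)}) hx
      have h0 : Set.EqOn (⇑f) (fun _ => (0 : ℝ)) ({x}ᶜ : Set L) := fun y hy => hno y hy
      have h0' := h0.closure (map_continuous f) continuous_const
      ext y
      rcases eq_or_ne y x with rfl | hyx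
      · simpa using h0' hx'
      · simpa using hno y hyx)
    refine ⟨interior {y : L | y ∈ closure ({y}ᶜ : Set L)} ∩ D, ?_, hDc.mono inter_subset_right, ?_⟩
    · rintro c ⟨hc1, hc2⟩
      exact ⟨hc1, hDx hc2⟩
    · exact hDd.open_subset_closure_inter isOpen_interior hx
end

section
/- Let X be a Banach space over ℝ whose dual X* satisfies: for every set A ⊆ X* and every f in the weak-star closure of A, there is a countable subset A₀ ⊆ A such that f belongs to the weak-star closure of the linear span of A₀. Then for every uncountable regular cardinal κ and every family {Z_σ}_{σ<κ} of closed linear subspaces of X indexed by the ordinals below κ with Z_β ⊊ Z_α whenever α < β < κ and ⋂_{σ<κ} Z_σ = {0}, the set ⋂_{σ<κ} (B_X + Z_σ) is bounded, where B_X is the closed unit ball of X. -/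
open Set Cardinal Pointwise

/-!
Let `x` lie in every `B_X + Z_σ` and let `f` be a norm-one functional with `f x = ‖x‖`.
Since the `Z_σ` decrease to `0`, every finite-dimensional subspace meets some `Z_σ` trivially,
and Hahn–Banach on `X ⧸ Z_σ` then shows that the union of the annihilators `Z_σ^⊥` is weak-star
dense. By countable span tightness `f` is in the weak-star closure of the span of countably many
functionals, each annihilating some `Z_σ`; as `κ` has uncountable cofinality they all annihilate
one `Z_σ`, and so does `f`, because `Z_σ^⊥` is weak-star closed. Writing `x = b + z` with
`‖b‖ ≤ 1` and `z ∈ Z_σ` gives `‖x‖ = f b ≤ 1`.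
-/

theorem Submodule.exists_inf_eq_bot_of_iInf_eq_bot {K V ι : Type*} [DivisionRing K]
    [AddCommGroup V] [Module K V] [Preorder ι] [IsDirected ι (· ≤ ·)] [Nonempty ι]
    {Z : ι → Submodule K V} (hZ : Antitone Z) (hinter : ⨅ i, Z i = ⊥)
    (E : Submodule K V) [FiniteDimensional K E] : ∃ i, E ⊓ Z i = ⊥ := by
  let d : ι → ℕ := fun i => Module.finrank K ↥(E ⊓ Z i)
  refine ⟨Function.argmin d, eq_bot_iff.2 <| hinter ▸ le_iInf fun j => ?_⟩
  obtain ⟨k, hik, hjk⟩ := directed_of (· ≤ ·) (Function.argmin d) j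
  have hle : E ⊓ Z k ≤ E ⊓ Z (Function.argmin d) := inf_le_inf_left E (hZ hik)
  have heq : E ⊓ Z k = E ⊓ Z (Function.argmin d) :=
    Submodule.eq_of_le_of_finrank_le hle (Function.argmin_le d k)
  exact heq ▸ inf_le_right.trans (hZ hjk)

theorem Ordinal.bddAbove_of_countable {o : Ordinal} (ho : ℵ₀ < o.cof)
    {s : Set {σ : Ordinal // σ < o}} (hs : s.Countable) : BddAbove s := by
  have ht : (Subtype.val '' s).Countable := hs.image _
  have hlt : sSup (Subtype.val '' s) < o := by
    refine Ordinal.sSup_lt_of_lt_cof ?_ (by rintro _ ⟨σ, -, rfl⟩; exact σ.2)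
    rw [← Ordinal.lift_cof]
    exact (le_aleph0_iff_set_countable.2 ht).trans_lt (aleph0_lt_lift.2 ho)
  refine ⟨⟨_, hlt⟩, fun σ hσ => ?_⟩
  exact le_csSup ⟨o, by rintro _ ⟨τ, -, rfl⟩; exact τ.2.le⟩ (mem_image_of_mem _ hσ)

theorem exists_mem_of_mem_closure_iUnion {R V ι : Type*} [Semiring R] [AddCommMonoid V]
    [Module R V] [TopologicalSpace V] [Preorder ι]
    (htight : ∀ A : Set V, ∀ f ∈ closure A, ∃ A₀ ⊆ A, A₀.Countable ∧
      f ∈ closure (Submodule.span R A₀ : Set V))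
    (hbdd : ∀ s : Set ι, s.Countable → BddAbove s)
    {N : ι → Submodule R V} (hN : Monotone N) (hclosed : ∀ i, IsClosed (N i : Set V))
    {f : V} (hf : f ∈ closure (⋃ i, (N i : Set V))) : ∃ i, f ∈ N i := by
  have : Nonempty ι := ⟨(hbdd ∅ countable_empty).some⟩
  obtain ⟨A₀, hA₀, hcount, hspan⟩ := htight _ f hf
  choose! idx hidx using fun a (ha : a ∈ A₀) => mem_iUnion.1 (hA₀ ha)
  obtain ⟨j, hj⟩ := hbdd _ (hcount.image idx)
  have hA₀j : Submodule.span R A₀ ≤ N j :=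
    Submodule.span_le.2 fun a ha => hN (hj (mem_image_of_mem idx ha)) (hidx a ha)
  exact ⟨j, closure_minimal hA₀j (hclosed j) hspan⟩

section

variable {𝕜 X : Type*} [RCLike 𝕜] [NormedAddCommGroup X] [NormedSpace 𝕜 X]

theorem ContinuousLinearMap.exists_le_ker_eqOn_of_inf_eq_bot {Z E : Submodule 𝕜 X}
    [IsClosed (Z : Set X)] [FiniteDimensional 𝕜 E] (hEZ : E ⊓ Z = ⊥) (f : X →L[𝕜] 𝕜) :
    ∃ g : X →L[𝕜] 𝕜, Z ≤ g.ker ∧ Set.EqOn g f (E : Set X) := by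
  let ρ : E →ₗ[𝕜] X ⧸ Z := Z.mkQ ∘ₗ E.subtype
  have hρ : Function.Injective ρ := by
    rw [← LinearMap.ker_eq_bot, eq_bot_iff]
    intro e he
    have : (e : X) ∈ E ⊓ Z := ⟨e.2, (Submodule.Quotient.mk_eq_zero Z).1 he⟩
    rw [hEZ] at this
    exact Subtype.ext this
  let eqv : E ≃ₗ[𝕜] LinearMap.range ρ := LinearEquiv.ofInjective ρ hρ
  have : FiniteDimensional 𝕜 (LinearMap.range ρ) := Module.Finite.equiv eqv
  obtain ⟨G, hG, -⟩ := exists_extension_norm_eq (LinearMap.range ρ)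
    (LinearMap.toContinuousLinearMap (f.toLinearMap ∘ₗ E.subtype ∘ₗ eqv.symm.toLinearMap))
  refine ⟨G.comp Z.mkQL, fun z hz => ?_, fun e he => ?_⟩
  · simp [(Submodule.Quotient.mk_eq_zero Z).2 hz]
  · have : Z.mkQL e = (eqv ⟨e, he⟩ : X ⧸ Z) := rfl
    simp [this, hG]

namespace WeakDual

def annihilator (Z : Submodule 𝕜 X) : Submodule 𝕜 (WeakDual 𝕜 X) where
  carrier := {g | ∀ z ∈ Z, g z = 0}
  add_mem' {g h} hg hh z hz := show g z + h z = 0 by rw [hg z hz, hh z hz, add_zero]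
  zero_mem' _ _ := rfl
  smul_mem' c g hg z hz := show c * g z = 0 by rw [hg z hz, mul_zero]

theorem mem_annihilator {Z : Submodule 𝕜 X} {g : WeakDual 𝕜 X} :
    g ∈ annihilator Z ↔ ∀ z ∈ Z, g z = 0 := Iff.rfl

theorem annihilator_anti : Antitone (annihilator : Submodule 𝕜 X → _) :=
  fun _ _ h _ hg z hz => hg z (h hz)

theorem isClosed_annihilator (Z : Submodule 𝕜 X) :
    IsClosed (annihilator Z : Set (WeakDual 𝕜 X)) := by
  have : (annihilator Z : Set (WeakDual 𝕜 X)) = ⋂ z ∈ Z, {g | g z = 0} := by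
    ext; simp [mem_annihilator]
  rw [this]
  exact isClosed_biInter fun z _ => isClosed_eq (eval_continuous z) continuous_const

theorem dense_iUnion_annihilator {ι : Type*} [Preorder ι] [IsDirected ι (· ≤ ·)] [Nonempty ι]
    {Z : ι → Submodule 𝕜 X} (hclosed : ∀ i, IsClosed (Z i : Set X)) (hZ : Antitone Z)
    (hinter : ⨅ i, Z i = ⊥) : Dense (⋃ i, (annihilator (Z i) : Set (WeakDual 𝕜 X))) := by
  intro F
  have hemb : Topology.IsEmbedding (fun (g : WeakDual 𝕜 X) (y : X) => g y) :=
    WeakBilin.isEmbedding (B := topDualPairing 𝕜 X) fun _ _ h => ContinuousLinearMap.coe_injective h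
  rw [hemb.closure_eq_preimage_closure_image, mem_preimage, mem_closure_iff_nhds]
  intro U hU
  rw [nhds_pi] at hU
  obtain ⟨I, hI, t, ht, hsub⟩ := Filter.mem_pi.1 hU
  have : FiniteDimensional 𝕜 (Submodule.span 𝕜 I) := FiniteDimensional.span_of_finite 𝕜 hI
  obtain ⟨i, hi⟩ := Submodule.exists_inf_eq_bot_of_iInf_eq_bot hZ hinter (Submodule.span 𝕜 I)
  have := hclosed i
  obtain ⟨g, hgZ, hgF⟩ := ContinuousLinearMap.exists_le_ker_eqOn_of_inf_eq_bot hi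
    (F : X →L[𝕜] 𝕜)
  refine ⟨fun y => g y, hsub fun y hy => ?_, g, mem_iUnion.2 ⟨i, hgZ⟩, rfl⟩
  show g y ∈ t y
  rw [hgF (Submodule.subset_span hy)]
  exact mem_of_mem_nhds (ht y)

end WeakDual

theorem norm_apply_le_of_mem_closedBall_add {Z : Submodule 𝕜 X} {r : ℝ} {x : X}
    (hx : x ∈ Metric.closedBall (0 : X) r + (Z : Set X)) {f : X →L[𝕜] 𝕜}
    (hf : ∀ z ∈ Z, f z = 0) : ‖f x‖ ≤ ‖f‖ * r := by
  obtain ⟨b, hb, z, hz, rfl⟩ := hx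
  rw [map_add, hf z hz, add_zero]
  exact f.le_opNorm_of_le (mem_closedBall_zero_iff.1 hb)

end

theorem classB_of_countableSpanTight_general (X : Type*) [NormedAddCommGroup X]
    [NormedSpace ℝ X]
    (h4 : ∀ A : Set (WeakDual ℝ X), ∀ f ∈ closure A,
      ∃ A₀ ⊆ A, A₀.Countable ∧
        f ∈ closure (Submodule.span ℝ A₀ : Set (WeakDual ℝ X)))
    (κ : Cardinal) (hκ : Cardinal.aleph0 < κ) (hreg : κ.IsRegular)
    (Z : {σ : Ordinal // σ < κ.ord} → Submodule ℝ X)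
    (hclosed : ∀ σ, IsClosed (Z σ : Set X))
    (hnest : ∀ α β, α < β → Z β < Z α)
    (hinter : ⋂ σ, (Z σ : Set X) = {0}) :
    Bornology.IsBounded (⋂ σ, (Metric.closedBall (0 : X) 1 + (Z σ : Set X))) := by
  have hZ : Antitone Z := fun α β h =>
    h.eq_or_lt.elim (fun h => h ▸ le_rfl) fun h => (hnest α β h).le
  have : Nonempty {σ : Ordinal // σ < κ.ord} := ⟨⟨0, ord_pos.2 (aleph0_pos.trans hκ)⟩⟩
  have hinter' : ⨅ σ, Z σ = ⊥ := SetLike.coe_injective <| by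
    rw [Submodule.coe_iInf, hinter, Submodule.bot_coe]
  refine (Metric.isBounded_closedBall (x := (0 : X)) (r := 1)).subset fun x hx => ?_
  rw [mem_closedBall_zero_iff]
  rcases eq_or_ne x 0 with rfl | hx0
  · simp
  obtain ⟨f, hf, hfx⟩ := exists_dual_vector ℝ x (norm_ne_zero_iff.2 hx0)
  obtain ⟨σ, hσ⟩ := exists_mem_of_mem_closure_iUnion h4
    (fun _ => Ordinal.bddAbove_of_countable (by rwa [hreg.cof_ord]))
    (WeakDual.annihilator_anti.comp hZ) (fun σ => WeakDual.isClosed_annihilator _)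
    (WeakDual.dense_iUnion_annihilator hclosed hZ hinter' (f : WeakDual ℝ X))
  calc ‖x‖ = ‖f x‖ := by rw [hfx, RCLike.norm_ofReal, abs_norm]
    _ ≤ ‖f‖ * 1 := norm_apply_le_of_mem_closedBall_add (mem_iInter.1 hx σ) hσ
    _ = 1 := by rw [hf, mul_one]

/-- If the dual of `X` has the countable-span tightness property, then `X` belongs to
class (B): for any strictly decreasing long family of closed subspaces with trivial
intersection, `⋂ (B_X + Z_σ)` is bounded. -/
theorem classB_of_countableSpanTight (X : Type*) [NormedAddCommGroup X]
    [NormedSpace ℝ X] [CompleteSpace X]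
    (h4 : ∀ A : Set (WeakDual ℝ X), ∀ f ∈ closure A,
      ∃ A₀ ⊆ A, A₀.Countable ∧
        f ∈ closure (Submodule.span ℝ A₀ : Set (WeakDual ℝ X)))
    (κ : Cardinal) (hκ : Cardinal.aleph0 < κ) (hreg : κ.IsRegular)
    (Z : {σ : Ordinal // σ < κ.ord} → Submodule ℝ X)
    (hclosed : ∀ σ, IsClosed (Z σ : Set X))
    (hnest : ∀ α β, α < β → Z β < Z α)
    (hinter : ⋂ σ, (Z σ : Set X) = {0}) :
    Bornology.IsBounded (⋂ σ, (Metric.closedBall (0 : X) 1 + (Z σ : Set X))) :=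
  classB_of_countableSpanTight_general X h4 κ hκ hreg Z hclosed hnest hinter
end

section
/- Let X be a Banach space over ℝ and κ an uncountable regular cardinal. Suppose that for every family {Y_σ}_{σ<κ} of nonempty closed affine subspaces of X with Y_β ⊆ Y_α whenever α < β < κ, the intersection ⋂_{σ<κ} Y_σ is nonempty. Then for every family {Z_σ}_{σ<κ} of closed linear subspaces of X with Z_β ⊊ Z_α whenever α < β < κ and ⋂_{σ<κ} Z_σ = {0}, the set ⋂_{σ<κ} (B_X + Z_σ) is bounded, where B_X is the closed unit ball of X. -/
/-!
The seminorm `p x = ⨆ σ, dist (x, Z σ)` is a norm on `X` (as `⋂ σ, Z σ = {0}`), dominated by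
`‖·‖`, and `p ≤ 1` on `⋂ σ, (B_X + Z σ)`. The affine intersection property makes `(X, p)`
complete: the limits in the quotients `X ⧸ Z σ` of a `p`-Cauchy sequence are compatible cosets
`v σ + Z σ`, a decreasing chain of closed affine subspaces, and any common point of the chain is
a `p`-limit of the sequence. By the open mapping theorem `p` is then equivalent to `‖·‖`.
-/

open Set Cardinal Pointwise Filter Topology Metric

-- A copy of `X`, to carry a second norm without clashing with the instances on `X`.
def Renormed (X : Type*) : Type _ := X

def Seminorm.IsComplete {𝕜 X : Type*} [SeminormedRing 𝕜] [AddCommGroup X] [Module 𝕜 X]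
    (p : Seminorm 𝕜 X) : Prop :=
  ∀ u : ℕ → X, (∀ ε > 0, ∃ N, ∀ m ≥ N, ∀ n ≥ N, p (u m - u n) < ε) →
    ∃ y, Tendsto (fun n => p (u n - y)) atTop (𝓝 0)

theorem Seminorm.exists_norm_le_mul_of_complete {𝕜 X : Type*} [NontriviallyNormedField 𝕜]
    [NormedAddCommGroup X] [NormedSpace 𝕜 X] [CompleteSpace X] (p : Seminorm 𝕜 X)
    (hp_def : ∀ x, p x = 0 → x = 0) (K : ℝ) (hp_le : ∀ x, p x ≤ K * ‖x‖)
    (hp_complete : p.IsComplete) :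
    ∃ C : NNReal, ∀ x, ‖x‖ ≤ C * p x := by
  let : AddCommGroup (Renormed X) := inferInstanceAs (AddCommGroup X)
  let : Module 𝕜 (Renormed X) := inferInstanceAs (Module 𝕜 X)
  let : NormedAddCommGroup (Renormed X) :=
    AddGroupNorm.toNormedAddCommGroup
      { p.toAddGroupSeminorm with eq_zero_of_map_eq_zero' := hp_def }
  let : NormedSpace 𝕜 (Renormed X) := ⟨fun c x => (map_smul_eq_mul p c x).le⟩
  have : CompleteSpace (Renormed X) := Metric.complete_of_cauchySeq_tendsto fun u hu => by
    simp only [Metric.cauchySeq_iff, dist_eq_norm] at hu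
    obtain ⟨y, hy⟩ := hp_complete u hu
    exact ⟨y, tendsto_iff_norm_sub_tendsto_zero.2 hy⟩
  let L : X →L[𝕜] Renormed X := LinearMap.mkContinuous (LinearEquiv.refl 𝕜 X).toLinearMap K hp_le
  have hL : Function.Surjective L := fun x => ⟨x, rfl⟩
  obtain ⟨C, hC⟩ := L.antilipschitz_of_injective_of_isClosed_range (fun _ _ h => h)
    (hL.range_eq ▸ isClosed_univ)
  exact ⟨C, hC.le_mul_norm (map_zero L)⟩

def AffineIntersectionProperty (𝕜 ι X : Type*) [Ring 𝕜] [AddCommGroup X] [Module 𝕜 X]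
    [TopologicalSpace X] [LT ι] : Prop :=
  ∀ Y : ι → Set X, (∀ σ, ∃ (v : X) (Z : Submodule 𝕜 X), IsClosed (Z : Set X) ∧
    Y σ = (v + ·) '' (Z : Set X)) → (∀ α β, α < β → Y β ⊆ Y α) → (⋂ σ, Y σ).Nonempty

theorem AffineIntersectionProperty.exists_mkQ_eq {𝕜 ι X : Type*} [Ring 𝕜] [AddCommGroup X]
    [Module 𝕜 X] [TopologicalSpace X] [Preorder ι] (h : AffineIntersectionProperty 𝕜 ι X)
    {Z : ι → Submodule 𝕜 X} (hZ : ∀ i, IsClosed (Z i : Set X)) (hanti : Antitone Z) {v : ι → X}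
    (hv : ∀ i j, i < j → (Z i).mkQ (v j) = (Z i).mkQ (v i)) :
    ∃ y, ∀ i, (Z i).mkQ y = (Z i).mkQ (v i) := by
  obtain ⟨y, hy⟩ := h (fun i => (v i + ·) '' (Z i : Set X)) (fun i => ⟨v i, Z i, hZ i, rfl⟩)
    fun i j hij => by
      rintro _ ⟨z, hz, rfl⟩
      exact ⟨v j - v i + z, (Z i).add_mem ((Submodule.Quotient.eq _).1 (hv i j hij))
        (hanti hij.le hz), by dsimp only; abel⟩
  refine ⟨y, fun i => (Submodule.Quotient.eq _).2 ?_⟩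
  obtain ⟨z, hz, rfl⟩ := mem_iInter.1 hy i
  simpa using hz

section QuotientFamily

variable {𝕜 ι X : Type*} [NormedField 𝕜] [NormedAddCommGroup X] [NormedSpace 𝕜 X]
  (Z : ι → Submodule 𝕜 X)

theorem Submodule.norm_mkQ_eq_infDist (S : Submodule 𝕜 X) (x : X) :
    ‖S.mkQ x‖ = infDist x S :=
  QuotientAddGroup.norm_mk (S := S.toAddSubgroup) x

theorem Submodule.norm_mkQ_le_of_le {S T : Submodule 𝕜 X} (h : S ≤ T) (x : X) :
    ‖T.mkQ x‖ ≤ ‖S.mkQ x‖ := by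
  rw [norm_mkQ_eq_infDist, norm_mkQ_eq_infDist]
  exact infDist_le_infDist_of_subset h ⟨0, S.zero_mem⟩

theorem Submodule.norm_mkQ_eq_zero {S : Submodule 𝕜 X} (hS : IsClosed (S : Set X)) {x : X} :
    ‖S.mkQ x‖ = 0 ↔ x ∈ S :=
  QuotientAddGroup.norm_mk_eq_zero (hS := hS)

noncomputable def supQuotientSeminorm : Seminorm 𝕜 X :=
  ⨆ i, (normSeminorm 𝕜 (X ⧸ Z i)).comp (Z i).mkQ

theorem supQuotientSeminorm_apply (x : X) : supQuotientSeminorm Z x = ⨆ i, ‖(Z i).mkQ x‖ :=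
  Seminorm.iSup_apply <| Seminorm.bddAbove_range_iff.2 fun x =>
    ⟨‖x‖, forall_mem_range.2 fun i => Submodule.Quotient.norm_mk_le (Z i) x⟩

theorem norm_mkQ_le_supQuotientSeminorm (i : ι) (x : X) :
    ‖(Z i).mkQ x‖ ≤ supQuotientSeminorm Z x := by
  rw [supQuotientSeminorm_apply]
  exact le_ciSup (f := fun i => ‖(Z i).mkQ x‖)
    ⟨‖x‖, forall_mem_range.2 fun i => Submodule.Quotient.norm_mk_le (Z i) x⟩ i

theorem supQuotientSeminorm_le_of_forall {x : X} {r : ℝ} (hr : 0 ≤ r)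
    (h : ∀ i, ‖(Z i).mkQ x‖ ≤ r) : supQuotientSeminorm Z x ≤ r := by
  rw [supQuotientSeminorm_apply]
  exact Real.iSup_le h hr

theorem supQuotientSeminorm_le_norm (x : X) : supQuotientSeminorm Z x ≤ ‖x‖ :=
  supQuotientSeminorm_le_of_forall Z (norm_nonneg x) fun i =>
    Submodule.Quotient.norm_mk_le (Z i) x

theorem supQuotientSeminorm_eq_zero_iff (hZ : ∀ i, IsClosed (Z i : Set X)) {x : X} :
    supQuotientSeminorm Z x = 0 ↔ x ∈ ⋂ i, (Z i : Set X) := by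
  simp only [mem_iInter, SetLike.mem_coe, ← Submodule.norm_mkQ_eq_zero (hZ _)]
  refine ⟨fun h i => le_antisymm (h ▸ norm_mkQ_le_supQuotientSeminorm Z i x) (norm_nonneg _),
    fun h => le_antisymm (supQuotientSeminorm_le_of_forall Z le_rfl fun i => (h i).le)
      (apply_nonneg _ x)⟩

theorem supQuotientSeminorm_le_of_mem_iInter {x : X} {r : ℝ} (hr : 0 ≤ r)
    (hx : x ∈ ⋂ i, closedBall (0 : X) r + (Z i : Set X)) : supQuotientSeminorm Z x ≤ r := by
  refine supQuotientSeminorm_le_of_forall Z hr fun i => ?_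
  obtain ⟨b, hb, z, hz, rfl⟩ := mem_iInter.1 hx i
  have hz0 : (Z i).mkQ z = 0 := (Submodule.Quotient.mk_eq_zero _).2 hz
  rw [map_add, hz0, add_zero]
  exact (Submodule.Quotient.norm_mk_le _ b).trans (mem_closedBall_zero_iff.1 hb)

theorem supQuotientSeminorm_isComplete [CompleteSpace X] [Preorder ι]
    (hZ : ∀ i, IsClosed (Z i : Set X)) (hanti : Antitone Z)
    (hrep : ∀ v : ι → X, (∀ i j, i < j → (Z i).mkQ (v j) = (Z i).mkQ (v i)) →
      ∃ y, ∀ i, (Z i).mkQ y = (Z i).mkQ (v i)) :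
    (supQuotientSeminorm Z).IsComplete := by
  intro u hu
  have hcauchy : ∀ i, CauchySeq fun n => (Z i).mkQ (u n) := fun i =>
    Metric.cauchySeq_iff.2 fun ε hε => (hu ε hε).imp fun N hN m hm n hn => by
      rw [dist_eq_norm, ← map_sub]
      exact (norm_mkQ_le_supQuotientSeminorm Z i _).trans_lt (hN m hm n hn)
  have hlim : ∀ i, ∃ v, Tendsto (fun n => (Z i).mkQ (u n)) atTop (𝓝 ((Z i).mkQ v)) := fun i => by
    obtain ⟨w, hw⟩ := cauchySeq_tendsto_of_complete (hcauchy i)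
    obtain ⟨v, rfl⟩ := (Z i).mkQ_surjective w
    exact ⟨v, hw⟩
  choose v hv using hlim
  have hcompat : ∀ i j, i < j → (Z i).mkQ (v j) = (Z i).mkQ (v i) := fun i j hij => by
    have := hZ i -- makes `X ⧸ Z i` Hausdorff
    refine tendsto_nhds_unique ?_ (hv i)
    rw [tendsto_iff_norm_sub_tendsto_zero]
    refine squeeze_zero (fun n => norm_nonneg _) (fun n => ?_)
      (tendsto_iff_norm_sub_tendsto_zero.1 (hv j))
    rw [← map_sub, ← map_sub]
    exact Submodule.norm_mkQ_le_of_le (hanti hij.le) _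
  obtain ⟨y, hy⟩ := hrep v hcompat
  refine ⟨y, Metric.tendsto_atTop.2 fun ε hε => ?_⟩
  obtain ⟨N, hN⟩ := hu (ε / 2) (half_pos hε)
  refine ⟨N, fun n hn => ?_⟩
  rw [Real.dist_0_eq_abs, abs_of_nonneg (apply_nonneg _ _)]
  refine (supQuotientSeminorm_le_of_forall Z (half_pos hε).le fun i => ?_).trans_lt
    (half_lt_self hε)
  rw [map_sub, hy i]
  refine le_of_tendsto (tendsto_const_nhds.sub (hv i)).norm
    (eventually_atTop.2 ⟨N, fun m hm => ?_⟩)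
  rw [← map_sub]
  exact ((norm_mkQ_le_supQuotientSeminorm Z i _).trans_lt (hN n hn m hm)).le

end QuotientFamily

theorem classB_of_affine_intersection_property_general (X : Type*) [NormedAddCommGroup X]
    [NormedSpace ℝ X] [CompleteSpace X]
    (κ : Cardinal)
    (hcap : ∀ Y : {σ : Ordinal // σ < κ.ord} → Set X,
      (∀ σ, ∃ (v : X) (Z : Submodule ℝ X), IsClosed (Z : Set X) ∧
        Y σ = (v + ·) '' (Z : Set X)) →
      (∀ α β, α < β → Y β ⊆ Y α) → (⋂ σ, Y σ).Nonempty)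
    (Z : {σ : Ordinal // σ < κ.ord} → Submodule ℝ X)
    (hclosed : ∀ σ, IsClosed (Z σ : Set X))
    (hnest : ∀ α β, α < β → Z β < Z α)
    (hinter : ⋂ σ, (Z σ : Set X) = {0}) :
    Bornology.IsBounded (⋂ σ, (Metric.closedBall (0 : X) 1 + (Z σ : Set X))) := by
  have hanti : Antitone Z := antitone_iff_forall_lt.2 fun α β h => (hnest α β h).le
  obtain ⟨C, hC⟩ := (supQuotientSeminorm Z).exists_norm_le_mul_of_complete
    (fun x hx => by simpa [hinter] using (supQuotientSeminorm_eq_zero_iff Z hclosed).1 hx) 1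
    (fun x => (one_mul ‖x‖).symm ▸ supQuotientSeminorm_le_norm Z x)
    (supQuotientSeminorm_isComplete Z hclosed hanti fun _ hv =>
      AffineIntersectionProperty.exists_mkQ_eq hcap hclosed hanti hv)
  refine (isBounded_closedBall (x := (0 : X)) (r := C)).subset fun x hx => ?_
  rw [mem_closedBall_zero_iff]
  calc ‖x‖ ≤ C * supQuotientSeminorm Z x := hC x
    _ ≤ C * 1 := by gcongr; exact supQuotientSeminorm_le_of_mem_iInter Z zero_le_one hx
    _ = C := mul_one _

/-- If every nested long family of nonempty closed affine subspaces of `X` has nonempty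
intersection, then `⋂ (B_X + Z_σ)` is bounded for every strictly decreasing long family of
closed subspaces with trivial intersection. -/
theorem classB_of_affine_intersection_property (X : Type*) [NormedAddCommGroup X]
    [NormedSpace ℝ X] [CompleteSpace X]
    (κ : Cardinal) (hκ : Cardinal.aleph0 < κ) (hreg : κ.IsRegular)
    (hcap : ∀ Y : {σ : Ordinal // σ < κ.ord} → Set X,
      (∀ σ, ∃ (v : X) (Z : Submodule ℝ X), IsClosed (Z : Set X) ∧
        Y σ = (v + ·) '' (Z : Set X)) →
      (∀ α β, α < β → Y β ⊆ Y α) → (⋂ σ, Y σ).Nonempty)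
    (Z : {σ : Ordinal // σ < κ.ord} → Submodule ℝ X)
    (hclosed : ∀ σ, IsClosed (Z σ : Set X))
    (hnest : ∀ α β, α < β → Z β < Z α)
    (hinter : ⋂ σ, (Z σ : Set X) = {0}) :
    Bornology.IsBounded (⋂ σ, (Metric.closedBall (0 : X) 1 + (Z σ : Set X))) :=
  classB_of_affine_intersection_property_general X κ hcap Z hclosed hnest hinter
end

section
/- Let X be a Banach space over ℝ belonging to class (B), let κ be an uncountable regular cardinal, and let {Z_σ}_{σ<κ} be a family of closed linear subspaces of X with Z_β ⊊ Z_α whenever α < β < κ and ⋂_{σ<κ} Z_σ = {0}. Let Y ⊆ X be a closed linear subspace whose density character (the least cardinality of a dense subset of Y) is strictly less than κ. Then Y = ⋂_{σ<κ} closure(Y + Z_σ), where Y + Z_σ = {y + z : y ∈ Y, z ∈ Z_σ} and closure is taken in the norm topology. -/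
open Set Cardinal Pointwise

universe u

/-- `X` belongs to class (B) if for every uncountable regular cardinal `κ` and every
strictly decreasing family `{Z_σ}_{σ<κ}` of closed subspaces with trivial intersection,
the set `⋂_{σ<κ} (B_X + Z_σ)` is bounded. -/
def ClassB (X : Type u) [NormedAddCommGroup X] [NormedSpace ℝ X] : Prop :=
  ∀ κ : Cardinal.{u}, Cardinal.aleph0 < κ → κ.IsRegular →
    ∀ Z : {σ : Ordinal // σ < κ.ord} → Submodule ℝ X,
      (∀ σ, IsClosed (Z σ : Set X)) →
      (∀ α β, α < β → Z β < Z α) →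
      (⋂ σ, (Z σ : Set X)) = {0} →
      Bornology.IsBounded (⋂ σ, (Metric.closedBall (0 : X) 1 + (Z σ : Set X)))

/-- If `X` is in class (B) and `Y` is a closed subspace of density character `< κ`, then
`Y = ⋂_{σ<κ} closure (Y + Z_σ)`. -/
theorem subspace_eq_iInter_closure_add (X : Type*) [NormedAddCommGroup X]
    [NormedSpace ℝ X] [CompleteSpace X] (hB : ClassB X)
    (κ : Cardinal) (hκ : Cardinal.aleph0 < κ) (hreg : κ.IsRegular)
    (Z : {σ : Ordinal // σ < κ.ord} → Submodule ℝ X)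
    (hclosed : ∀ σ, IsClosed (Z σ : Set X))
    (hnest : ∀ α β, α < β → Z β < Z α)
    (hinter : ⋂ σ, (Z σ : Set X) = {0})
    (Y : Submodule ℝ X) (hYc : IsClosed (Y : Set X))
    (hdens : ∃ D : Set X, D ⊆ Y ∧ Cardinal.mk D < κ ∧ (Y : Set X) ⊆ closure D) :
    (Y : Set X) = ⋂ σ, closure ((Y : Set X) + (Z σ : Set X)) := by
  obtain ⟨D, hDY, hDκ, hDdense⟩ := hdens
  -- monotonicity of Z
  have hmono : ∀ σ τ : {σ : Ordinal // σ < κ.ord}, σ ≤ τ → Z τ ≤ Z σ := by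
    intro σ τ hle
    rcases eq_or_lt_of_le hle with h | h
    · rw [h]
    · exact (hnest σ τ h).le
  -- the bounded set from class (B)
  have hK : Bornology.IsBounded (⋂ σ, (Metric.closedBall (0 : X) 1 + (Z σ : Set X))) :=
    hB κ hκ hreg Z hclosed hnest hinter
  obtain ⟨M, hM⟩ := isBounded_iff_forall_norm_le.mp hK
  have h0K : (0 : X) ∈ ⋂ σ, (Metric.closedBall (0 : X) 1 + (Z σ : Set X)) := by
    refine mem_iInter.mpr fun σ => ?_
    refine ⟨0, Metric.mem_closedBall_self zero_le_one, 0, (Z σ).zero_mem, by simp⟩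
  have hM0 : 0 ≤ M := by simpa using hM 0 h0K
  apply Set.Subset.antisymm
  · -- easy inclusion
    intro x hx
    refine mem_iInter.mpr fun σ => subset_closure ?_
    exact ⟨x, hx, 0, (Z σ).zero_mem, by simp⟩
  · intro x hx
    rw [mem_iInter] at hx
    -- show x ∈ Y using closedness
    have hxcl : x ∈ closure (Y : Set X) := by
      rw [Metric.mem_closure_iff]
      intro δ hδ
      set ε : ℝ := δ / (M + 1) with hε
      have hε0 : 0 < ε := div_pos hδ (by linarith)
      -- for each σ, choose d ∈ D with ε⁻¹ • (x - d) ∈ B + Z σ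
      have key : ∀ σ, ∃ d ∈ D, ε⁻¹ • (x - d) ∈ Metric.closedBall (0 : X) 1 + (Z σ : Set X) := by
        intro σ
        obtain ⟨p, hp, hxp⟩ := Metric.mem_closure_iff.mp (hx σ) (ε / 2) (by linarith)
        obtain ⟨y, hy, z, hz, rfl⟩ := hp
        obtain ⟨d, hd, hyd⟩ := Metric.mem_closure_iff.mp (hDdense hy) (ε / 2) (by linarith)
        refine ⟨d, hd, ε⁻¹ • (x - d - z), ?_, ε⁻¹ • z, (Z σ).smul_mem _ hz, ?_⟩
        · rw [Metric.mem_closedBall, dist_zero_right, norm_smul, norm_inv, Real.norm_eq_abs,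
            abs_of_pos hε0]
          have h1 : ‖x - d - z‖ ≤ ‖x - (y + z)‖ + ‖y - d‖ := by
            have : x - d - z = (x - (y + z)) + (y - d) := by abel
            rw [this]; exact norm_add_le _ _
          have h2 : ‖x - (y + z)‖ < ε / 2 := by rwa [← dist_eq_norm]
          have h3 : ‖y - d‖ < ε / 2 := by rwa [← dist_eq_norm]
          have hle : ‖x - d - z‖ ≤ ε := by linarith
          calc ε⁻¹ * ‖x - d - z‖ ≤ ε⁻¹ * ε := by gcongr
            _ = 1 := inv_mul_cancel₀ hε0.ne'
        · show ε⁻¹ • (x - d - z) + ε⁻¹ • z = ε⁻¹ • (x - d)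
          rw [← smul_add]
          congr 1
          abel
      choose f hfD hfK using key
      -- pigeonhole: some d ∈ D has cofinal fiber
      have hpigeon : ∃ d, d ∈ D ∧ ∀ σ, ∃ τ, σ ≤ τ ∧ f τ = d := by
        by_contra hcon
        push_neg at hcon
        choose g hg using fun d : D => hcon (d : X) d.2
        have hsup : iSup (fun d : D => ((g d : {σ : Ordinal // σ < κ.ord}) : Ordinal))
            < κ.ord :=
          iSup_lt_ord_of_isRegular hreg hDκ (fun d => (g d).2)
        set τ : {σ : Ordinal // σ < κ.ord} := ⟨_, hsup⟩ with hτ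
        have hd : f τ ∈ D := hfD τ
        have hle : g ⟨f τ, hd⟩ ≤ τ :=
          Ordinal.le_iSup (fun d : D => ((g d : {σ : Ordinal // σ < κ.ord}) : Ordinal)) ⟨f τ, hd⟩
        exact hg ⟨f τ, hd⟩ τ hle rfl
      obtain ⟨d, hdD, hdcof⟩ := hpigeon
      -- then ε⁻¹ • (x - d) ∈ ⋂ (B + Z σ)
      have hmem : ε⁻¹ • (x - d) ∈ ⋂ σ, (Metric.closedBall (0 : X) 1 + (Z σ : Set X)) := by
        refine mem_iInter.mpr fun σ => ?_
        obtain ⟨τ, hστ, hfτ⟩ := hdcof σ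
        have := hfK τ
        rw [hfτ] at this
        obtain ⟨b, hb, z, hz, hbz⟩ := this
        exact ⟨b, hb, z, hmono σ τ hστ hz, hbz⟩
      have hnorm : ‖ε⁻¹ • (x - d)‖ ≤ M := hM _ hmem
      refine ⟨d, hDY hdD, ?_⟩
      rw [norm_smul, norm_inv, Real.norm_eq_abs, abs_of_pos hε0] at hnorm
      have : ‖x - d‖ ≤ ε * M := by
        rw [inv_mul_le_iff₀ hε0] at hnorm
        linarith [hnorm]
      have hεM : ε * M < δ := by
        have : ε * (M + 1) = δ := div_mul_cancel₀ δ (by linarith : (M:ℝ) + 1 ≠ 0)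
        nlinarith
      rw [dist_eq_norm]
      linarith
    rwa [hYc.closure_eq] at hxcl
end

section
/- Let X be a Banach space over ℝ, κ an uncountable regular cardinal, and {Z_σ}_{σ<κ} a family of closed linear subspaces of X with Z_β ⊊ Z_α whenever α < β < κ and ⋂_{σ<κ} Z_σ = {0}. Let Y ⊆ X be a closed linear subspace whose density character (the least cardinality of a dense subset of Y) is strictly less than κ. Then there exists θ < κ such that Z_θ ∩ Y = {0}. -/
open Set Cardinal

universe u v

/-! The chain `W σ = Z σ ⊓ Y` takes fewer than `κ` values. Indeed, for each `σ` let `τ` be the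
least index with `W τ < W σ`; a point of `W σ` outside `Z τ`, rescaled by its distance to the
closed subspace `Z τ`, lies at distance at least `1` from every smaller member of the chain.
Distinct members thus carry `1`-separated points of `Y`, at most one per point of a dense set.
By regularity of `κ` the chain is constant from some `θ < κ` on, so `W θ ⊆ ⋂ σ, Z σ = {0}`. -/

theorem Submodule.exists_mem_forall_one_le_norm_sub {E : Type*} [SeminormedAddCommGroup E]
    [NormedSpace ℝ E] {F V : Submodule ℝ E} (hF : IsClosed (F : Set E)) (hVF : ¬V ≤ F) :
    ∃ u ∈ V, ∀ z ∈ F, 1 ≤ ‖u - z‖ := by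
  obtain ⟨x, hxV, hxF⟩ := SetLike.not_le_iff_exists.1 hVF
  set d := Metric.infDist x (F : Set E)
  have hd : 0 < d := (hF.notMem_iff_infDist_pos ⟨0, F.zero_mem⟩).1 hxF
  refine ⟨d⁻¹ • x, V.smul_mem _ hxV, fun z hz => ?_⟩
  have hdz : d ≤ ‖x - d • z‖ := by
    simpa [dist_eq_norm] using Metric.infDist_le_dist_of_mem (x := x) (F.smul_mem d hz)
  calc (1 : ℝ) = d⁻¹ * d := (inv_mul_cancel₀ hd.ne').symm
    _ ≤ d⁻¹ * ‖x - d • z‖ := by gcongr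
    _ = ‖d⁻¹ • (x - d • z)‖ := by rw [norm_smul, Real.norm_of_nonneg (inv_nonneg.2 hd.le)]
    _ = ‖d⁻¹ • x - z‖ := by rw [smul_sub, smul_smul, inv_mul_cancel₀ hd.ne', one_smul]

theorem Submodule.exists_one_le_dist_of_inf_ne {E ι : Type*} [SeminormedAddCommGroup E]
    [NormedSpace ℝ E] [LinearOrder ι] [WellFoundedLT ι] {Z : ι → Submodule ℝ E}
    (hZ : ∀ i, IsClosed (Z i : Set E)) (hZanti : Antitone Z) (Y : Submodule ℝ E) :
    ∃ u : ι → E, (∀ i, u i ∈ Z i ⊓ Y) ∧ ∀ i j, Z i ⊓ Y ≠ Z j ⊓ Y → 1 ≤ dist (u i) (u j) := by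
  have key : ∀ i, ∃ x ∈ Z i ⊓ Y, ∀ j, Z j ⊓ Y < Z i ⊓ Y → ∀ z ∈ Z j ⊓ Y, 1 ≤ ‖x - z‖ := by
    intro i
    by_cases hS : {j | Z j ⊓ Y < Z i ⊓ Y}.Nonempty
    · obtain ⟨τ, hτ, hτmin⟩ := wellFounded_lt.has_min _ hS
      have hiτ : ¬Z i ⊓ Y ≤ Z τ := fun h => hτ.not_ge (le_inf h inf_le_right)
      obtain ⟨x, hx, hxZ⟩ := exists_mem_forall_one_le_norm_sub (hZ τ) hiτ
      exact ⟨x, hx, fun j hj z hz => hxZ z (hZanti (not_lt.1 (hτmin j hj)) (mem_inf.1 hz).1)⟩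
    · exact ⟨0, zero_mem _, fun j hj => (hS ⟨j, hj⟩).elim⟩
  choose u hu hsep using key
  refine ⟨u, hu, fun i j hij => ?_⟩
  wlog hle : i ≤ j generalizing i j
  · rw [dist_comm]
    exact this j i hij.symm (le_of_not_ge hle)
  have hlt : Z j ⊓ Y < Z i ⊓ Y := lt_of_le_of_ne (inf_le_inf_right Y (hZanti hle)) hij.symm
  simpa only [dist_eq_norm] using hsep i j hlt (u j) (hu j)

theorem Cardinal.lift_mk_range_le_of_one_le_dist {ι : Type*} {α : Type u} {E : Type v}
    [PseudoMetricSpace E] {f : ι → α} {u : ι → E} {D : Set E} (hD : ∀ i, u i ∈ closure D)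
    (hsep : ∀ i j, f i ≠ f j → 1 ≤ dist (u i) (u j)) : lift.{v} #(range f) ≤ lift.{u} #D := by
  have happrox : ∀ i, ∃ d ∈ D, dist (u i) d < 1 / 2 :=
    fun i => Metric.mem_closure_iff.1 (hD i) _ (by norm_num)
  choose e he hue using happrox
  refine lift_mk_le_lift_mk_of_injective (f := fun y => ⟨e (rangeSplitting f y), he _⟩) ?_
  intro y₁ y₂ hy
  set i := rangeSplitting f y₁
  set j := rangeSplitting f y₂
  have hij : e i = e j := congrArg Subtype.val hy
  by_contra hne
  have hfij : f i ≠ f j := fun h =>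
    hne (Subtype.ext (by simpa only [i, j, apply_rangeSplitting] using h))
  have hui : dist (u i) (e j) < 1 / 2 := hij ▸ hue i
  linarith [hsep i j hfij, dist_triangle_right (u i) (u j) (e j), hue j]

theorem Cardinal.IsRegular.exists_forall_ge_eq_of_antitone {κ : Cardinal.{u}} (hκ : κ.IsRegular)
    {α : Type u} [PartialOrder α] {W : {σ : Ordinal // σ < κ.ord} → α} (hW : Antitone W)
    (hrange : #(range W) < κ) : ∃ θ, ∀ σ, θ ≤ σ → W σ = W θ := by
  have hsup : ⨆ v : range W, (rangeSplitting W v).1 < κ.ord :=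
    Ordinal.iSup_lt_of_lt_cof (by rwa [hκ.cof_ord]) fun v => (rangeSplitting W v).2
  refine ⟨⟨_, hsup⟩, fun σ hσ => le_antisymm (hW hσ) ?_⟩
  calc W ⟨_, hsup⟩ ≤ W (rangeSplitting W ⟨W σ, σ, rfl⟩) := hW (Ordinal.le_iSup _ _)
    _ = W σ := apply_rangeSplitting W _

theorem exists_inter_subspace_trivial_general (X : Type*) [NormedAddCommGroup X]
    [NormedSpace ℝ X]
    (κ : Cardinal) (hreg : κ.IsRegular)
    (Z : {σ : Ordinal // σ < κ.ord} → Submodule ℝ X)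
    (hclosed : ∀ σ, IsClosed (Z σ : Set X))
    (hnest : ∀ α β, α < β → Z β < Z α)
    (hinter : ⋂ σ, (Z σ : Set X) = {0})
    (Y : Submodule ℝ X)
    (hdens : ∃ D : Set X, D ⊆ Y ∧ Cardinal.mk D < κ ∧ (Y : Set X) ⊆ closure D) :
    ∃ θ, (Z θ : Set X) ∩ (Y : Set X) = {0} := by
  obtain ⟨D, -, hDκ, hYD⟩ := hdens
  have hZanti : Antitone Z := antitone_iff_forall_lt.2 fun α β h => (hnest α β h).le
  obtain ⟨u, hu, hsep⟩ := Submodule.exists_one_le_dist_of_inf_ne hclosed hZanti Y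
  have hrange : #(range fun σ => Z σ ⊓ Y) < κ := by
    have := lift_mk_range_le_of_one_le_dist (fun σ => hYD (hu σ).2) hsep
    rw [lift_id, lift_id] at this
    exact this.trans_lt hDκ
  obtain ⟨θ, hθ⟩ := hreg.exists_forall_ge_eq_of_antitone
    (fun _ _ h => inf_le_inf_right Y (hZanti h)) hrange
  refine ⟨θ, ?_⟩
  rw [← Submodule.coe_inf (p := Z θ), ← Submodule.bot_coe (R := ℝ), SetLike.coe_set_eq,
    Submodule.eq_bot_iff]
  intro x hx
  have hxZ : ∀ σ, x ∈ Z σ := fun σ => by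
    rw [← hθ (max θ σ) le_sup_left] at hx
    exact hZanti le_sup_right (Submodule.mem_inf.1 hx).1
  simpa [hinter] using mem_iInter.2 hxZ

/-- If `Y` is a closed subspace of density character `< κ` and `{Z_σ}_{σ<κ}` is a strictly
decreasing family of closed subspaces with trivial intersection, then some `Z_θ` meets `Y`
trivially. -/
theorem exists_inter_subspace_trivial (X : Type*) [NormedAddCommGroup X]
    [NormedSpace ℝ X] [CompleteSpace X]
    (κ : Cardinal) (hκ : Cardinal.aleph0 < κ) (hreg : κ.IsRegular)
    (Z : {σ : Ordinal // σ < κ.ord} → Submodule ℝ X)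
    (hclosed : ∀ σ, IsClosed (Z σ : Set X))
    (hnest : ∀ α β, α < β → Z β < Z α)
    (hinter : ⋂ σ, (Z σ : Set X) = {0})
    (Y : Submodule ℝ X) (hYc : IsClosed (Y : Set X))
    (hdens : ∃ D : Set X, D ⊆ Y ∧ Cardinal.mk D < κ ∧ (Y : Set X) ⊆ closure D) :
    ∃ θ, (Z θ : Set X) ∩ (Y : Set X) = {0} :=
  exists_inter_subspace_trivial_general X κ hreg Z hclosed hnest hinter Y hdens
end

section
/- Let X be a Banach space over ℝ belonging to class (B) that admits no uncountable biorthogonal system. Suppose {x_α}_{α<ω₁} is a family of nonzero elements of X indexed by the countable ordinals, and {Γ_σ}_{σ<ω₁} is a family of cofinal (unbounded) subsets of ω₁ such that Γ_β ⊆ Γ_α whenever α < β < ω₁. Then ⋂_{σ<ω₁} closure(span{x_α : α ∈ Γ_σ}) ≠ {0}, where closure is taken in the norm topology. -/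
open Set Cardinal Pointwise

universe u

/-!
Suppose the intersection is `{0}`. The closed subspaces `Z σ = closure (span (x '' Γ σ))` decrease,
and they never stabilise, since each contains some `x γ ≠ 0` while their intersection is `{0}`.
So along a cofinal sequence of countable ordinals they decrease strictly, and class (B) bounds
`⋂ σ, (closedBall 0 1 + Z σ)`.
This bound makes `⋂ σ, closure (E + Z σ)` separable whenever `E` is, whereas no `Z σ` is separable
(a strictly decreasing `ω₁`-chain of closed sets cannot live in a hereditarily Lindelöf space).
Hence, given countably many vectors already chosen, Hahn–Banach yields a new vector deep in the
chain and a functional killing the earlier vectors and a tail of the chain; transfinite recursion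
produces an uncountable biorthogonal system, a contradiction.
-/

universe v

open Metric Bornology TopologicalSpace Filter

theorem WellFoundedLT.exists_forall_rec {ι α : Type*} [Preorder ι] [WellFoundedLT ι]
    {P : (i : ι) → (Iio i → α) → α → Prop} (h : ∀ i g, ∃ a, P i g a) :
    ∃ f : ι → α, ∀ i, P i (fun j => f j) (f i) := by
  let f : ι → α := wellFounded_lt.fix fun i IH => (h i fun j => IH j j.2).choose
  refine ⟨f, fun i => ?_⟩
  have hf : f i = (h i fun j => f j).choose := wellFounded_lt.fix_eq _ _
  exact hf ▸ (h i fun j => f j).choose_spec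

theorem Antitone.exists_lt_of_ne_iInf {ι α : Type*} [LinearOrder ι] [CompleteLattice α]
    {f : ι → α} (hf : Antitone f) {i : ι} (hi : f i ≠ ⨅ j, f j) : ∃ j, f j < f i := by
  by_contra! h
  refine hi (le_antisymm (le_iInf fun j => ?_) (iInf_le f i))
  rcases le_total j i with hji | hij
  · exact hf hji
  · exact ((hf hij).lt_or_eq.resolve_left (h j)).ge

section Cofinal

variable {ι κ : Type*} [LinearOrder ι]

theorem exists_le_apply_of_injective [Uncountable κ] (hι : ∀ i : ι, (Iio i).Countable)
    {g : κ → ι} (hg : g.Injective) (i : ι) : ∃ k, i ≤ g k := by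
  by_contra! h
  have : (univ : Set κ).Countable := ((hι i).preimage hg).mono fun k _ => h k
  exact not_countable (countable_univ_iff.1 this)

variable [LinearOrder κ] {α : Type*} [PartialOrder α]

theorem Antitone.strictMono_of_strictAnti_comp {Z : ι → α} (hZ : Antitone Z) {g : κ → ι}
    (hg : StrictAnti (Z ∘ g)) : StrictMono g :=
  fun _ _ h => lt_of_not_ge fun h' => (hg h).not_ge (hZ h')

variable [WellFoundedLT κ]

theorem Antitone.exists_strictAnti_comp (hbdd : ∀ s : Set ι, s.Countable → BddAbove s)
    (hκ : ∀ k : κ, (Iio k).Countable) {Z : ι → α} (hZ : Antitone Z)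
    (hdrop : ∀ i, ∃ j, Z j < Z i) : ∃ g : κ → ι, StrictAnti (Z ∘ g) := by
  have step : ∀ (k : κ) (prev : Iio k → ι), ∃ i, ∀ j, Z i < Z (prev j) := by
    intro k prev
    have := (hκ k).to_subtype
    obtain ⟨b, hb⟩ := hbdd _ (countable_range prev)
    obtain ⟨i, hi⟩ := hdrop b
    exact ⟨i, fun j => hi.trans_le (hZ (hb ⟨j, rfl⟩))⟩
  obtain ⟨g, hg⟩ := WellFoundedLT.exists_forall_rec step
  exact ⟨g, fun j k hjk => hg k ⟨j, hjk⟩⟩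

end Cofinal

abbrev CountableOrdinal : Type (u + 1) := {σ : Ordinal.{u} // σ < (aleph 1).ord}

namespace CountableOrdinal

theorem countable_Iio (σ : CountableOrdinal.{u}) : (Iio σ).Countable := by
  have hσ : (Iio σ.1).Countable := by
    rw [← le_aleph0_iff_set_countable, Cardinal.mk_Iio_ordinal, ← lift_aleph0.{u + 1, u},
      Cardinal.lift_le, ← Order.lt_succ_iff, succ_aleph0, ← lt_ord]
    exact σ.2
  exact hσ.preimage Subtype.val_injective

theorem bddAbove_of_countable {s : Set CountableOrdinal.{u}} (hs : s.Countable) : BddAbove s := by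
  have := hs.to_subtype
  have hlt : ⨆ τ : s, τ.1.1 < (aleph 1).ord := by
    have := Ordinal.iSup_lt_omega_one (f := fun τ : s => τ.1.1) fun τ => ord_aleph 1 ▸ τ.1.2
    rwa [← ord_aleph] at this
  exact ⟨⟨_, hlt⟩, fun τ hτ => Ordinal.le_iSup (fun τ : s => τ.1.1) ⟨τ, hτ⟩⟩

instance : NoMaxOrder CountableOrdinal.{u} :=
  ⟨fun σ => ⟨⟨Order.succ σ.1, (isSuccLimit_ord (aleph0_le_aleph 1)).succ_lt σ.2⟩,
    Order.lt_succ σ.1⟩⟩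

instance : Uncountable CountableOrdinal.{u} := by
  refine ⟨fun h => ?_⟩
  obtain ⟨b, hb⟩ := bddAbove_of_countable (countable_univ (α := CountableOrdinal.{u}))
  obtain ⟨c, hc⟩ := exists_gt b
  exact (hb (mem_univ c)).not_gt hc

theorem exists_strictAnti_comp_tendsto {α : Type*} [PartialOrder α]
    {Z : CountableOrdinal.{u} → α} (hZ : Antitone Z) (hdrop : ∀ σ, ∃ τ, Z τ < Z σ) :
    ∃ g : CountableOrdinal.{v} → CountableOrdinal.{u}, StrictAnti (Z ∘ g) ∧
      Tendsto g atTop atTop := by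
  obtain ⟨g, hg⟩ :=
    hZ.exists_strictAnti_comp (fun _ => bddAbove_of_countable) countable_Iio hdrop
  have hmono := hZ.strictMono_of_strictAnti_comp hg
  exact ⟨g, hg, hmono.monotone.tendsto_atTop_atTop
    (exists_le_apply_of_injective countable_Iio hmono.injective)⟩

end CountableOrdinal

theorem not_isSeparable_of_strictAnti {ι X : Type*} [LinearOrder ι] [NoMaxOrder ι]
    [TopologicalSpace X] [PseudoMetrizableSpace X]
    (hbdd : ∀ s : Set ι, s.Countable → BddAbove s) {F : ι → Set X} (hF : ∀ i, IsClosed (F i))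
    (hanti : StrictAnti F) (i : ι) : ¬ IsSeparable (F i) := by
  intro hsep
  have := hsep.secondCountableTopology
  obtain ⟨T, hT, hTU⟩ := isOpen_iUnion_countable (fun j => ((↑) : F i → X) ⁻¹' (F j)ᶜ)
    fun j => (hF j).isOpen_compl.preimage continuous_subtype_val
  obtain ⟨b, hb⟩ := hbdd _ (hT.insert i)
  obtain ⟨c, hbc⟩ := exists_gt b
  obtain ⟨y, hyb, hyc⟩ := exists_of_ssubset (hanti hbc)
  have hy : (⟨y, hanti.antitone (hb (mem_insert i T)) hyb⟩ : F i) ∈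
      ⋃ j ∈ T, ((↑) : F i → X) ⁻¹' (F j)ᶜ := by
    rw [hTU]
    exact mem_iUnion.2 ⟨c, hyc⟩
  obtain ⟨j, hj, hyj⟩ := mem_iUnion₂.1 hy
  exact hyj (hanti.antitone (hb (mem_insert_of_mem i hj)) hyb)

theorem Submodule.exists_dual_eq_one_of_notMem {𝕜 X : Type*} [RCLike 𝕜] [NormedAddCommGroup X]
    [NormedSpace 𝕜 X] {V : Submodule 𝕜 X} (hV : IsClosed (V : Set X)) {y : X} (hy : y ∉ V) :
    ∃ f : X →L[𝕜] 𝕜, f y = 1 ∧ ∀ v ∈ V, f v = 0 := by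
  have : IsClosed (V : Set X) := hV
  obtain ⟨g, hg⟩ := SeparatingDual.exists_eq_one (R := 𝕜) (x := V.mkQ y)
    (by rwa [ne_eq, Submodule.mkQ_apply, Submodule.Quotient.mk_eq_zero])
  exact ⟨g.comp V.mkQL, hg, fun v hv => by simp [(Submodule.Quotient.mk_eq_zero V).2 hv]⟩

section ChainOfSubspaces

variable {ι X : Type*} [NormedAddCommGroup X] [NormedSpace ℝ X] {W : ι → Submodule ℝ X}

theorem exists_norm_lt_of_isBounded (hB : IsBounded (⋂ i, closedBall (0 : X) 1 + (W i : Set X))) :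
    ∃ C > 0, ∀ w t, 0 < t → (∀ i, infDist w (W i : Set X) < t) → ‖w‖ < C * t := by
  obtain ⟨C, hC, hsub⟩ := hB.subset_ball_lt 0 0
  refine ⟨C, hC, fun w t ht hw => ?_⟩
  have hmem : t⁻¹ • w ∈ ⋂ i, closedBall (0 : X) 1 + (W i : Set X) := by
    refine mem_iInter.2 fun i => ?_
    obtain ⟨z, hz, hwz⟩ := (infDist_lt_iff ⟨0, (W i).zero_mem⟩).1 (hw i)
    refine ⟨t⁻¹ • (w - z), ?_, t⁻¹ • z, (W i).smul_mem _ hz, by module⟩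
    rw [mem_closedBall_zero_iff, norm_smul, norm_inv, Real.norm_of_nonneg ht.le,
      inv_mul_le_iff₀ ht, mul_one, ← dist_eq_norm]
    exact hwz.le
  have := mem_ball_zero_iff.1 (hsub hmem)
  rwa [norm_smul, norm_inv, Real.norm_of_nonneg ht.le, inv_mul_lt_iff₀ ht, mul_comm] at this

variable [LinearOrder ι] (hbdd : ∀ s : Set ι, s.Countable → BddAbove s)
include hbdd

theorem exists_forall_infDist_sub_lt (hW : Antitone W) {E : Submodule ℝ X} {D : Set X}
    (hD : D.Countable) (hED : (E : Set X) ⊆ closure D) {y : X}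
    (hy : y ∈ ⋂ i, closure ((E ⊔ W i : Submodule ℝ X) : Set X)) {ε : ℝ} (hε : 0 < ε) :
    ∃ d ∈ D, ∀ i, infDist (y - d) (W i : Set X) < ε := by
  by_contra! h
  choose τ hτ using h
  have := hD.to_subtype
  obtain ⟨b, hb⟩ := hbdd _ (countable_range fun d : D => τ d d.2)
  obtain ⟨p, hp, hyp⟩ := Metric.mem_closure_iff.1 (mem_iInter.1 hy b) (ε / 2) (half_pos hε)
  obtain ⟨e, he, w, hw, rfl⟩ := Submodule.mem_sup.1 hp
  obtain ⟨d, hd, hed⟩ := Metric.mem_closure_iff.1 (hED he) (ε / 2) (half_pos hε)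
  refine (hτ d hd).not_gt ?_
  calc infDist (y - d) (W (τ d hd) : Set X) ≤ infDist (y - d) (W b : Set X) :=
        infDist_le_infDist_of_subset (hW (hb ⟨⟨d, hd⟩, rfl⟩)) ⟨0, (W b).zero_mem⟩
    _ ≤ dist (y - d) w := infDist_le_dist_of_mem hw
    _ = ‖(y - (e + w)) + (e - d)‖ := by rw [dist_eq_norm]; abel_nf
    _ ≤ dist y (e + w) + dist e d := by
        rw [dist_eq_norm, dist_eq_norm]
        exact norm_add_le _ _
    _ < ε := by linarith

theorem isSeparable_iInter_closure_sup (hW : Antitone W)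
    (hB : IsBounded (⋂ i, closedBall (0 : X) 1 + (W i : Set X))) {E : Submodule ℝ X}
    (hE : IsSeparable (E : Set X)) :
    IsSeparable (⋂ i, closure ((E ⊔ W i : Submodule ℝ X) : Set X)) := by
  obtain ⟨D, hD, hED⟩ := hE
  obtain ⟨C, hC, hnorm⟩ := exists_norm_lt_of_isBounded hB
  refine ⟨D, hD, fun y hy => Metric.mem_closure_iff.2 fun δ hδ => ?_⟩
  obtain ⟨d, hd, hyd⟩ := exists_forall_infDist_sub_lt hbdd hW hD hED hy (div_pos hδ hC)
  refine ⟨d, hd, ?_⟩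
  rw [dist_eq_norm]
  simpa [mul_div_cancel₀ δ hC.ne'] using hnorm _ _ (div_pos hδ hC) hyd

theorem exists_dual_eq_one_of_isSeparable [NoMaxOrder ι] (hcl : ∀ i, IsClosed (W i : Set X))
    (hW : StrictAnti W) (hB : IsBounded (⋂ i, closedBall (0 : X) 1 + (W i : Set X)))
    {E : Submodule ℝ X} (hE : IsSeparable (E : Set X)) (u : ι) :
    ∃ y ∈ W u, ∃ i, ∃ f : X →L[ℝ] ℝ, f y = 1 ∧ (∀ z ∈ E, f z = 0) ∧ ∀ z ∈ W i, f z = 0 := by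
  have hnot : ¬ (W u : Set X) ⊆ ⋂ i, closure ((E ⊔ W i : Submodule ℝ X) : Set X) := fun h =>
    not_isSeparable_of_strictAnti hbdd hcl (SetLike.coe_strictMono.comp_strictAnti hW) u
      ((isSeparable_iInter_closure_sup hbdd hW.antitone hB hE).mono h)
  obtain ⟨y, hyu, hy⟩ := not_subset.1 hnot
  obtain ⟨i, hi⟩ := not_forall.1 (mem_iInter.not.1 hy)
  obtain ⟨f, hfy, hf⟩ := Submodule.exists_dual_eq_one_of_notMem
    (Submodule.isClosed_topologicalClosure (E ⊔ W i)) (y := y)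
    (by rwa [← SetLike.mem_coe, Submodule.topologicalClosure_coe])
  exact ⟨y, hyu, i, f, hfy,
    fun z hz => hf z (Submodule.le_topologicalClosure _ (Submodule.mem_sup_left hz)),
    fun z hz => hf z (Submodule.le_topologicalClosure _ (Submodule.mem_sup_right hz))⟩

theorem exists_biorthogonal_of_strictAnti [WellFoundedLT ι] [NoMaxOrder ι]
    (hIio : ∀ i : ι, (Iio i).Countable) (hcl : ∀ i, IsClosed (W i : Set X)) (hW : StrictAnti W)
    (hB : IsBounded (⋂ i, closedBall (0 : X) 1 + (W i : Set X))) :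
    ∃ (y : ι → X) (f : ι → X →L[ℝ] ℝ), (∀ i, f i (y i) = 1) ∧ ∀ i j, i ≠ j → f i (y j) = 0 := by
  -- the entry at `k` is `(y k, f k, τ k)` with `f k` vanishing on `W (τ k)`
  have step : ∀ (k : ι) (prev : Iio k → X × (X →L[ℝ] ℝ) × ι), ∃ a : X × (X →L[ℝ] ℝ) × ι,
      (∀ j, a.1 ∈ W (prev j).2.2) ∧ a.2.1 a.1 = 1 ∧ (∀ j, a.2.1 (prev j).1 = 0) ∧
        ∀ z ∈ W a.2.2, a.2.1 z = 0 := by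
    intro k prev
    have := (hIio k).to_subtype
    obtain ⟨u, hu⟩ := hbdd _ (countable_range fun j => (prev j).2.2)
    obtain ⟨y, hy, i, f, hfy, hfE, hfW⟩ := exists_dual_eq_one_of_isSeparable hbdd hcl hW hB
      ((countable_range fun j => (prev j).1).isSeparable.span) u
    exact ⟨(y, f, i), fun j => hW.antitone (hu ⟨j, rfl⟩) hy, hfy,
      fun j => hfE _ (Submodule.subset_span ⟨j, rfl⟩), hfW⟩
  obtain ⟨a, ha⟩ := WellFoundedLT.exists_forall_rec step
  refine ⟨fun i => (a i).1, fun i => (a i).2.1, fun i => (ha i).2.1, fun i j hij => ?_⟩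
  rcases hij.lt_or_gt with hij | hji
  · exact (ha i).2.2.2 _ ((ha j).1 ⟨i, hij⟩)
  · exact (ha i).2.2.1 ⟨j, hji⟩

end ChainOfSubspaces

theorem iInter_closedBall_add_comp {ι κ X : Type*} [NormedAddCommGroup X] [NormedSpace ℝ X]
    [Preorder ι] [Preorder κ] [Nonempty κ] [IsDirectedOrder κ] {W : ι → Submodule ℝ X}
    (hW : Antitone W) {g : κ → ι} (hg : Tendsto g atTop atTop) :
    ⋂ k, closedBall (0 : X) 1 + (W (g k) : Set X) = ⋂ i, closedBall (0 : X) 1 + (W i : Set X) :=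
  Antitone.iInf_comp_tendsto_atTop (fun _ _ h => add_subset_add_left (hW h)) hg

theorem ClassB.isBounded_of_antitone {X : Type v} [NormedAddCommGroup X] [NormedSpace ℝ X]
    (hB : ClassB X) {Z : CountableOrdinal.{u} → Submodule ℝ X} (hcl : ∀ σ, IsClosed (Z σ : Set X))
    (hZ : Antitone Z) (hdrop : ∀ σ, ∃ τ, Z τ < Z σ) (hZ0 : ⋂ σ, (Z σ : Set X) = {0}) :
    IsBounded (⋂ σ, closedBall (0 : X) 1 + (Z σ : Set X)) := by
  obtain ⟨g, hg, hgt⟩ : ∃ g : CountableOrdinal.{v} → CountableOrdinal.{u}, _ :=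
    CountableOrdinal.exists_strictAnti_comp_tendsto hZ hdrop
  have hg0 : ⋂ σ, (Z (g σ) : Set X) = {0} :=
    ((SetLike.coe_mono.comp_antitone hZ).iInf_comp_tendsto_atTop hgt).trans hZ0
  rw [← iInter_closedBall_add_comp hZ hgt]
  exact hB _ aleph0_lt_aleph_one isRegular_aleph_one (Z ∘ g) (fun _ => hcl _) (fun _ _ h => hg h)
    hg0

theorem exists_biorthogonal_of_antitone {X : Type*} [NormedAddCommGroup X] [NormedSpace ℝ X]
    {Z : CountableOrdinal.{u} → Submodule ℝ X}
    (hcl : ∀ σ, IsClosed (Z σ : Set X)) (hZ : Antitone Z) (hdrop : ∀ σ, ∃ τ, Z τ < Z σ)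
    (hB : IsBounded (⋂ σ, closedBall (0 : X) 1 + (Z σ : Set X))) :
    ∃ (y : CountableOrdinal.{v} → X) (f : CountableOrdinal.{v} → X →L[ℝ] ℝ),
      (∀ α, f α (y α) = 1) ∧ ∀ α β, α ≠ β → f α (y β) = 0 := by
  obtain ⟨g, hg, hgt⟩ : ∃ g : CountableOrdinal.{v} → CountableOrdinal.{u}, _ :=
    CountableOrdinal.exists_strictAnti_comp_tendsto hZ hdrop
  refine exists_biorthogonal_of_strictAnti (fun _ => CountableOrdinal.bddAbove_of_countable)
    CountableOrdinal.countable_Iio (fun _ => hcl _) hg ?_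
  rwa [iInter_closedBall_add_comp hZ hgt]

theorem iInter_closure_span_ne_trivial_general (X : Type*) [NormedAddCommGroup X]
    [NormedSpace ℝ X] (hB : ClassB X)
    (hbio : ¬ ∃ (x : {σ : Ordinal // σ < (Cardinal.aleph 1).ord} → X)
        (f : {σ : Ordinal // σ < (Cardinal.aleph 1).ord} → (X →L[ℝ] ℝ)),
        (∀ α, f α (x α) = 1) ∧ ∀ α β, α ≠ β → f α (x β) = 0)
    (x : {σ : Ordinal // σ < (Cardinal.aleph 1).ord} → X)
    (hx : ∀ σ, x σ ≠ 0)
    (Γ : {σ : Ordinal // σ < (Cardinal.aleph 1).ord} →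
      Set {σ : Ordinal // σ < (Cardinal.aleph 1).ord})
    (hcof : ∀ σ b, ∃ γ ∈ Γ σ, b < γ)
    (hnest : ∀ α β, α < β → Γ β ⊆ Γ α) :
    ⋂ σ, (closure (Submodule.span ℝ (x '' Γ σ) : Set X)) ≠ {0} := by
  intro h0
  set Z := fun σ => (Submodule.span ℝ (x '' Γ σ)).topologicalClosure
  have hcl : ∀ σ, IsClosed (Z σ : Set X) := fun σ => Submodule.isClosed_topologicalClosure _
  have hZ : Antitone Z := antitone_iff_forall_lt.2 fun σ τ h =>
    Submodule.topologicalClosure_mono (Submodule.span_mono (image_mono (hnest σ τ h)))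
  have hZ0 : ⋂ σ, (Z σ : Set X) = {0} := by
    simpa only [Z, Submodule.topologicalClosure_coe] using h0
  have hdrop : ∀ σ, ∃ τ, Z τ < Z σ := fun σ => hZ.exists_lt_of_ne_iInf fun h => by
    obtain ⟨γ, hγ, -⟩ := hcof σ (Classical.arbitrary _)
    have hγZ : x γ ∈ Z σ :=
      Submodule.le_topologicalClosure _ (Submodule.subset_span (mem_image_of_mem x hγ))
    rw [h, ← SetLike.mem_coe, Submodule.coe_iInf, hZ0] at hγZ
    exact hx γ hγZ
  exact hbio (exists_biorthogonal_of_antitone hcl hZ hdrop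
    (hB.isBounded_of_antitone hcl hZ hdrop hZ0))

/-- If `X` is in class (B) and admits no uncountable biorthogonal system, then for any
family `{x_α}_{α<ω₁}` of nonzero vectors and any nested family `{Γ_σ}_{σ<ω₁}` of cofinal
subsets of `ω₁`, the intersection `⋂_σ closure (span {x_α : α ∈ Γ_σ})` is nontrivial. -/
theorem iInter_closure_span_ne_trivial (X : Type*) [NormedAddCommGroup X]
    [NormedSpace ℝ X] [CompleteSpace X] (hB : ClassB X)
    (hbio : ¬ ∃ (x : {σ : Ordinal // σ < (Cardinal.aleph 1).ord} → X)
        (f : {σ : Ordinal // σ < (Cardinal.aleph 1).ord} → (X →L[ℝ] ℝ)),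
        (∀ α, f α (x α) = 1) ∧ ∀ α β, α ≠ β → f α (x β) = 0)
    (x : {σ : Ordinal // σ < (Cardinal.aleph 1).ord} → X)
    (hx : ∀ σ, x σ ≠ 0)
    (Γ : {σ : Ordinal // σ < (Cardinal.aleph 1).ord} →
      Set {σ : Ordinal // σ < (Cardinal.aleph 1).ord})
    (hcof : ∀ σ b, ∃ γ ∈ Γ σ, b < γ)
    (hnest : ∀ α β, α < β → Γ β ⊆ Γ α) :
    ⋂ σ, (closure (Submodule.span ℝ (x '' Γ σ) : Set X)) ≠ {0} :=
  iInter_closure_span_ne_trivial_general X hB hbio x hx Γ hcof hnest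
end
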